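/- arXiv:1511.04230 — 8 statements merged into one kernel-verified Lean document; each statement's English description precedes it below -/
import Mathlib

section
/- Fix phases σ₊, σ₋ ∈ [0,2π) and c > 0. Set σ̃ = (σ₊+σ₋)/2, p = e^{iσ₊}(e^{−2iσ₋} − e^{−2iσ₊} − 4e^{−2iσ̃}), q = e^{−2iσ₋} + e^{−2iσ₊} − 6e^{−2iσ̃}, and r⁻ = e^{−iσ₊} − e^{−iσ₋}. Let s ∈ ℂ satisfy s² = q and assume r⁻ + s ≠ 0, and let λ ∈ ℂ, λ ≠ 0, satisfy λ² = (p + e^{iσ₊} r⁻ s)/(2(−r⁻ − s)). Set α = c/√2, β = (c/√2)·(r⁻+s)/2 and θ = 1/(√2 λ) − e^{iσ₊}β/(√2 λ α) − √2 λ. Define Ψ : ℤ → ℂ² by Ψ(x) = (−θ)^x·(α, β) for x ≥ 0 and Ψ(x) = θ^{|x|}·(α + (e^{iσ₊} − e^{iσ₋})β, β) for x ≤ −1. Then Ψ is a generalized eigenvector of the complete two-phase QW with eigenvalue λ, i.e. λΨ(x) = P_{x+1}Ψ(x+1) + Q_{x−1}Ψ(x−1) for all x ∈ ℤ. (Quantifying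 over both square roots s of q and both square roots λ yields all four eigenvalue–eigenvector families λ⁽¹⁾,…,λ⁽⁴⁾ of the paper.) -/
noncomputable section
open Complex

/-- Position-dependent phase of the complete two-phase QW: `σ₊` for `x ≥ 0`, `σ₋` for `x ≤ -1`. -/
def qwPhase (σp σm : ℝ) (x : ℤ) : ℝ := if 0 ≤ x then σp else σm

/-- One application of `Ψ(x) ↦ P_{x+1}Ψ(x+1) + Q_{x-1}Ψ(x-1)` for the complete two-phase QW,
with `P_x = (1/√2)[[1, e^{iσ(x)}],[0,0]]` and `Q_x = (1/√2)[[0,0],[e^{-iσ(x)},-1]]`. -/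
def qwStep (σp σm : ℝ) (Ψ : ℤ → ℂ × ℂ) (x : ℤ) : ℂ × ℂ :=
  ((Ψ (x+1)).1 / (Real.sqrt 2 : ℂ)
      + Complex.exp (Complex.I * (qwPhase σp σm (x+1) : ℂ)) * (Ψ (x+1)).2 / (Real.sqrt 2 : ℂ),
   Complex.exp (-Complex.I * (qwPhase σp σm (x-1) : ℂ)) * (Ψ (x-1)).1 / (Real.sqrt 2 : ℂ)
      - (Ψ (x-1)).2 / (Real.sqrt 2 : ℂ))

theorem stmt_0
    (σp σm : ℝ) (hσp : σp ∈ Set.Ico 0 (2 * Real.pi)) (hσm : σm ∈ Set.Ico 0 (2 * Real.pi))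
    (c : ℝ) (hc : 0 < c)
    (p q rm s lam θ α β : ℂ)
    (hp : p = Complex.exp (Complex.I * (σp : ℂ)) *
        (Complex.exp (-2 * Complex.I * (σm : ℂ)) - Complex.exp (-2 * Complex.I * (σp : ℂ))
          - 4 * Complex.exp (-2 * Complex.I * (((σp + σm) / 2 : ℝ) : ℂ))))
    (hq : q = Complex.exp (-2 * Complex.I * (σm : ℂ)) + Complex.exp (-2 * Complex.I * (σp : ℂ))
          - 6 * Complex.exp (-2 * Complex.I * (((σp + σm) / 2 : ℝ) : ℂ)))
    (hrm : rm = Complex.exp (-Complex.I * (σp : ℂ)) - Complex.exp (-Complex.I * (σm : ℂ)))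
    (hs : s ^ 2 = q) (hrs : rm + s ≠ 0)
    (hlam0 : lam ≠ 0)
    (hlam : lam ^ 2 = (p + Complex.exp (Complex.I * (σp : ℂ)) * rm * s) / (2 * (-rm - s)))
    (hα : α = (c : ℂ) / (Real.sqrt 2 : ℂ))
    (hβ : β = ((c : ℂ) / (Real.sqrt 2 : ℂ)) * ((rm + s) / 2))
    (hθ : θ = 1 / ((Real.sqrt 2 : ℂ) * lam)
        - Complex.exp (Complex.I * (σp : ℂ)) * β / ((Real.sqrt 2 : ℂ) * lam * α)
        - (Real.sqrt 2 : ℂ) * lam)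
    (Ψ : ℤ → ℂ × ℂ)
    (hΨ : ∀ x : ℤ, Ψ x =
      if 0 ≤ x then ((-θ) ^ x.natAbs • ((α, β) : ℂ × ℂ))
      else (θ ^ x.natAbs •
        ((α + (Complex.exp (Complex.I * (σp : ℂ)) - Complex.exp (Complex.I * (σm : ℂ))) * β, β)
          : ℂ × ℂ))) :
    ∀ x : ℤ, lam • Ψ x = qwStep σp σm Ψ x := by
  set K : ℂ := ((Real.sqrt 2 : ℝ) : ℂ) with hK_def
  set a : ℂ := Complex.exp (Complex.I * (σp : ℂ)) with ha_def
  set b : ℂ := Complex.exp (Complex.I * (σm : ℂ)) with hb_def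
  have hK2 : K ^ 2 = 2 := by
    rw [hK_def, ← Complex.ofReal_pow, Real.sq_sqrt (by norm_num : (2:ℝ) ≥ 0)]; norm_num
  have hK0 : K ≠ 0 := by
    rw [hK_def]
    simpa using Real.sqrt_ne_zero'.mpr (by norm_num : (0:ℝ) < 2)
  have ha0 : a ≠ 0 := Complex.exp_ne_zero _
  have hb0 : b ≠ 0 := Complex.exp_ne_zero _
  have hc0 : (c : ℂ) ≠ 0 := by exact_mod_cast hc.ne'
  have hα0 : α ≠ 0 := by rw [hα]; exact div_ne_zero hc0 hK0
  -- exp identities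
  have einvp : Complex.exp (-Complex.I * (σp : ℂ)) * a = 1 := by
    rw [ha_def, ← Complex.exp_add, show -Complex.I * (σp:ℂ) + Complex.I * σp = 0 by ring,
      Complex.exp_zero]
  have einvm : Complex.exp (-Complex.I * (σm : ℂ)) * b = 1 := by
    rw [hb_def, ← Complex.exp_add, show -Complex.I * (σm:ℂ) + Complex.I * σm = 0 by ring,
      Complex.exp_zero]
  have e2p : Complex.exp (-2 * Complex.I * (σp : ℂ)) * a * a = 1 := by
    rw [ha_def, ← Complex.exp_add, ← Complex.exp_add,
      show -2 * Complex.I * (σp:ℂ) + Complex.I * σp + Complex.I * σp = 0 by ring,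
      Complex.exp_zero]
  have e2m : Complex.exp (-2 * Complex.I * (σm : ℂ)) * b * b = 1 := by
    rw [hb_def, ← Complex.exp_add, ← Complex.exp_add,
      show -2 * Complex.I * (σm:ℂ) + Complex.I * σm + Complex.I * σm = 0 by ring,
      Complex.exp_zero]
  have e2t : Complex.exp (-2 * Complex.I * (((σp + σm) / 2 : ℝ) : ℂ)) * a * b = 1 := by
    rw [ha_def, hb_def, ← Complex.exp_add, ← Complex.exp_add,
      show -2 * Complex.I * (((σp + σm) / 2 : ℝ) : ℂ) + Complex.I * σp + Complex.I * σm = 0 by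
        push_cast; ring,
      Complex.exp_zero]
  -- polynomial forms of the hypotheses
  have HS : a^2 * b^2 * s^2 = a^2 + b^2 - 6*a*b := by
    rw [hs, hq]; linear_combination a^2 * e2m + b^2 * e2p - 6*a*b * e2t
  have HP : a * b^2 * p = a^2 - b^2 - 4*a*b := by
    rw [hp]; linear_combination a^2 * e2m - b^2 * e2p - 4*a*b * e2t
  have HRM : a * b * rm = b - a := by
    rw [hrm]; linear_combination b * einvp - a * einvm
  have hrs' : (2:ℂ) * (-rm - s) ≠ 0 := by
    refine mul_ne_zero two_ne_zero fun h => hrs ?_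
    linear_combination -h
  have HLAM : lam^2 * (2 * (-rm - s)) = p + a * rm * s := by
    rw [hlam, div_mul_cancel₀ _ hrs']
  have HA : K * α = (c : ℂ) := by rw [hα]; field_simp
  have h2β : 2 * β = α * (rm + s) := by
    have h : K * (2 * β) = K * (α * (rm + s)) := by
      rw [hβ, hα]; field_simp
    exact mul_left_cancel₀ hK0 h
  have hβ0 : β ≠ 0 := by
    intro h
    apply hrs
    have : α * (rm + s) = 0 := by rw [← h2β, h, mul_zero]
    rcases mul_eq_zero.mp this with h' | h'
    · exact absurd h' hα0
    · exact h'
  have HTH : θ * (K * lam * α) = α - a*β - 2*lam^2*α := by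
    have HTH' : θ * (K * lam * α) = α - a*β - K^2*lam^2*α := by
      rw [hθ]; field_simp
    linear_combination HTH' - lam^2 * α * hK2
  -- core algebraic facts
  have hGab : a*b*(a*b*(rm+s)^2 + 2*(a-b)*(rm+s) + 4) = 0 := by
    linear_combination (a*b*rm + b - a + 2*a*b*s + 2*(a-b)) * HRM + HS
  have hG : a*b*(rm+s)^2 + 2*(a-b)*(rm+s) + 4 = 0 := by
    rcases mul_eq_zero.mp hGab with h | h
    · exact absurd h (mul_ne_zero ha0 hb0)
    · exact h
  have F1 : a*b*β^2 + (a-b)*α*β + α^2 = 0 := by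
    linear_combination (a*b*(2*β + α*(rm+s))/4 + (a-b)*α/2) * h2β + α^2/4 * hG
  have H2' : a^2*b^2*(rm+s)^2 = 2*a^2 + 2*b^2 - 8*a*b + 2*a*b*s*(b-a) := by
    linear_combination (a*b*rm + (b-a) + 2*a*b*s) * HRM + HS
  have STAR : -2*(rm+s)*lam^2*a*b^2 = a^2 - b^2 - 4*a*b + (b-a)*a*b*s := by
    linear_combination a*b^2 * HLAM + HP + a*b*s * HRM
  have H2ab : (4*a*lam^2*(rm+s)) * (a*b^2) = (4 - a^2*(rm+s)^2) * (a*b^2) := by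
    linear_combination (-2*a) * STAR + a * H2'
  have H2 : 4*a*lam^2*(rm+s) = 4 - a^2*(rm+s)^2 :=
    mul_right_cancel₀ (mul_ne_zero ha0 (pow_ne_zero 2 hb0)) H2ab
  have F2 : 2*lam^2*a*α*β = α^2 - a^2*β^2 := by
    linear_combination (lam^2*a*α + a^2*(2*β + α*(rm+s))/4) * h2β + α^2/4 * H2
  have hKla : K * lam * α ≠ 0 := mul_ne_zero (mul_ne_zero hK0 hlam0) hα0
  have hM : K * lam * α * a * β ≠ 0 := mul_ne_zero (mul_ne_zero hKla ha0) hβ0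
  -- the four scalar eigen-identities
  have T1 : K * lam * α = -(θ * (α + a*β)) := by
    have T1m : (K*lam*α) * (K*lam*α) = (-(θ*(α + a*β))) * (K*lam*α) := by
      linear_combination (α + a*β) * HTH + lam^2*α^2 * hK2 - F2
    exact mul_right_cancel₀ hKla T1m
  have T2 : K * lam * θ * β * a = a*β - α := by
    have T2m : (K*lam*θ*β*a) * (K*lam*α) = (a*β - α) * (K*lam*α) := by
      linear_combination K*lam*β*a * HTH - K*lam * F2
    exact mul_right_cancel₀ hKla T2m
  have T3 : K * lam * θ * (α + (a-b)*β) = α + a*β := by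
    have T3m : (K*lam*θ*(α + (a-b)*β)) * (K*lam*α*a*β) = (α + a*β) * (K*lam*α*a*β) := by
      linear_combination a*β*K*lam*(α + (a-b)*β) * HTH - K*lam*α * F1 - K*lam*(α + (a-b)*β) * F2
    exact mul_right_cancel₀ hM T3m
  have T4 : K * lam * b * β = θ * (α + (a - 2*b)*β) := by
    have T4m : (K*lam*b*β) * (K*lam*α*a*β) = (θ*(α + (a - 2*b)*β)) * (K*lam*α*a*β) := by
      linear_combination (-(a*β*(α + (a - 2*b)*β))) * HTH + a*α*b*β^2*lam^2 * hK2
        + ((a-b)*β + α) * F2 + (α - a*β) * F1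
    exact mul_right_cancel₀ hM T4m
  -- now the case analysis
  have hEp : Complex.exp (-Complex.I * (σp : ℂ)) = a⁻¹ := by
    rw [neg_mul, Complex.exp_neg, ← ha_def]
  have hEm : Complex.exp (-Complex.I * (σm : ℂ)) = b⁻¹ := by
    rw [neg_mul, Complex.exp_neg, ← hb_def]
  have hPsiPos : ∀ n : ℕ, Ψ (n : ℤ) = ((-θ)^n * α, (-θ)^n * β) := by
    intro n
    rw [hΨ, if_pos (by positivity), Int.natAbs_natCast]
    rfl
  have hPsiNeg : ∀ n : ℕ, Ψ (-(n+1) : ℤ) = (θ^(n+1) * (α + (a-b)*β), θ^(n+1) * β) := by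
    intro n
    rw [hΨ, if_neg (by omega)]
    have h1 : ((-(n+1) : ℤ)).natAbs = n+1 := by omega
    rw [h1]
    rfl
  have hφp : ∀ y : ℤ, 0 ≤ y → Complex.exp (Complex.I * ((qwPhase σp σm y : ℝ) : ℂ)) = a := by
    intro y hy; rw [qwPhase, if_pos hy, ← ha_def]
  have hφp' : ∀ y : ℤ, 0 ≤ y → Complex.exp (-Complex.I * ((qwPhase σp σm y : ℝ) : ℂ)) = a⁻¹ := by
    intro y hy; rw [qwPhase, if_pos hy]; exact hEp
  have hφm' : ∀ y : ℤ, ¬ 0 ≤ y → Complex.exp (-Complex.I * ((qwPhase σp σm y : ℝ) : ℂ)) = b⁻¹ := by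
    intro y hy; rw [qwPhase, if_neg hy]; exact hEm
  have hφmP : ∀ y : ℤ, ¬ 0 ≤ y → Complex.exp (Complex.I * ((qwPhase σp σm y : ℝ) : ℂ)) = b := by
    intro y hy; rw [qwPhase, if_neg hy, ← hb_def]
  intro x
  unfold qwStep
  rw [← hK_def]
  obtain ⟨n, rfl | rfl⟩ := x.eq_nat_or_neg
  · -- x = n ≥ 0
    rcases n with _ | m
    · -- x = 0
      have E1 : Ψ ((0:ℕ) + 1) = ((-θ)^1 * α, (-θ)^1 * β) := hPsiPos 1
      have E2 : Ψ (((0:ℕ):ℤ) - 1) = (θ^(0+1) * (α + (a-b)*β), θ^(0+1) * β) := by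
        rw [show (((0:ℕ):ℤ) - 1) = (-((0:ℕ)+1) : ℤ) by norm_num]
        exact hPsiNeg 0
      rw [hPsiPos 0, E1, E2, hφp _ (by norm_num), hφm' _ (by norm_num)]
      simp only [Prod.smul_mk, smul_eq_mul, Prod.mk.injEq]
      constructor
      · field_simp
        linear_combination T1
      · field_simp
        linear_combination T4
    · -- x = m+1
      have E1 : Ψ (((m+1:ℕ):ℤ) + 1) = ((-θ)^(m+2) * α, (-θ)^(m+2) * β) := by
        rw [show (((m+1:ℕ):ℤ) + 1) = ((m+2:ℕ):ℤ) by push_cast; ring]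
        exact hPsiPos (m+2)
      have E2 : Ψ (((m+1:ℕ):ℤ) - 1) = ((-θ)^m * α, (-θ)^m * β) := by
        rw [show (((m+1:ℕ):ℤ) - 1) = ((m:ℕ):ℤ) by push_cast; ring]
        exact hPsiPos m
      rw [hPsiPos (m+1), E1, E2, hφp _ (by omega), hφp' _ (by omega)]
      simp only [Prod.smul_mk, smul_eq_mul, Prod.mk.injEq]
      constructor
      · field_simp
        linear_combination (-θ)^(m+1) * T1
      · field_simp
        linear_combination (-(-θ)^m) * T2
  · -- x = -n
    rcases n with _ | _ | m
    · -- x = -0 = 0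
      have E1 : Ψ ((-(0:ℕ):ℤ) + 1) = ((-θ)^1 * α, (-θ)^1 * β) := by
        rw [show ((-(0:ℕ):ℤ) + 1) = ((1:ℕ):ℤ) by norm_num]
        exact hPsiPos 1
      have E2 : Ψ ((-(0:ℕ):ℤ) - 1) = (θ^(0+1) * (α + (a-b)*β), θ^(0+1) * β) := by
        rw [show ((-(0:ℕ):ℤ) - 1) = (-((0:ℕ)+1) : ℤ) by norm_num]
        exact hPsiNeg 0
      have E0 : Ψ (-(0:ℕ):ℤ) = ((-θ)^0 * α, (-θ)^0 * β) := by
        rw [show (-(0:ℕ):ℤ) = ((0:ℕ):ℤ) by norm_num]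
        exact hPsiPos 0
      rw [E0, E1, E2, hφp _ (by norm_num), hφm' _ (by norm_num)]
      simp only [Prod.smul_mk, smul_eq_mul, Prod.mk.injEq]
      constructor
      · field_simp
        linear_combination T1
      · field_simp
        linear_combination T4
    · -- x = -1
      have E0 : Ψ (-(1:ℕ):ℤ) = (θ^(0+1) * (α + (a-b)*β), θ^(0+1) * β) := by
        rw [show (-(1:ℕ):ℤ) = (-((0:ℕ)+1) : ℤ) by norm_num]
        exact hPsiNeg 0
      have E1 : Ψ ((-(1:ℕ):ℤ) + 1) = ((-θ)^0 * α, (-θ)^0 * β) := by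
        rw [show ((-(1:ℕ):ℤ) + 1) = ((0:ℕ):ℤ) by norm_num]
        exact hPsiPos 0
      have E2 : Ψ ((-(1:ℕ):ℤ) - 1) = (θ^(1+1) * (α + (a-b)*β), θ^(1+1) * β) := by
        rw [show ((-(1:ℕ):ℤ) - 1) = (-((1:ℕ)+1) : ℤ) by norm_num]
        exact hPsiNeg 1
      rw [E0, E1, E2, hφp _ (by norm_num), hφm' _ (by norm_num)]
      simp only [Prod.smul_mk, smul_eq_mul, Prod.mk.injEq]
      constructor
      · field_simp
        linear_combination T3
      · field_simp
        linear_combination θ * T4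
    · -- x = -(m+2)
      have E0 : Ψ (-((m+2:ℕ)):ℤ) = (θ^(m+2) * (α + (a-b)*β), θ^(m+2) * β) := by
        rw [show (-((m+2:ℕ)):ℤ) = (-(((m+1:ℕ):ℤ) + 1) : ℤ) by push_cast; ring]
        exact hPsiNeg (m+1)
      have E1 : Ψ ((-((m+2:ℕ)):ℤ) + 1) = (θ^(m+1) * (α + (a-b)*β), θ^(m+1) * β) := by
        rw [show ((-((m+2:ℕ)):ℤ) + 1) = (-(((m:ℕ):ℤ) + 1) : ℤ) by push_cast; ring]
        exact hPsiNeg m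
      have E2 : Ψ ((-((m+2:ℕ)):ℤ) - 1) = (θ^(m+3) * (α + (a-b)*β), θ^(m+3) * β) := by
        rw [show ((-((m+2:ℕ)):ℤ) - 1) = (-(((m+2:ℕ):ℤ) + 1) : ℤ) by push_cast; ring]
        exact hPsiNeg (m+2)
      rw [E0, E1, E2, hφmP _ (by omega), hφm' _ (by omega)]
      simp only [Prod.smul_mk, smul_eq_mul, Prod.mk.injEq]
      constructor
      · field_simp
        linear_combination θ^(m+1) * T3
      · field_simp
        linear_combination θ^(m+2) * T4
end
end

section
/- (Generating-function relations, Lemma 1.) Fix σ₊, σ₋ ∈ [0,2π) and let λ ∈ ℂ and Ψ : ℤ → ℂ² satisfy λΨ(x) = P_{x+1}Ψ(x+1) + Q_{x−1}Ψ(x−1) for all x ∈ ℤ, and write α = Ψ^L(0), β = Ψ^R(0). Let z ∈ ℂ, z ≠ 0, be such that the families (Ψ^L(x)z^x)_{x≥1}, (Ψ^R(x)z^x)_{x≥1}, (Ψ^L(−x)z^{−x})_{x≥1}, (Ψ^R(−x)z^{−x})_{x≥1} are summable, and set f₊^j(z) = ∑_{x≥1} Ψ^j(x)z^x and f₋^j(z)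 = ∑_{x≥1} Ψ^j(−x)z^{−x} for j = L, R. Then: (λ − 1/(√2 z))·f₊^L(z) − (e^{iσ₊}/(√2 z))·f₊^R(z) = −λα; −(e^{−iσ₊}z/√2)·f₊^L(z) + (λ + z/√2)·f₊^R(z) = (e^{−iσ₊}α − β)z/√2; (λ − 1/(√2 z))·f₋^L(z) − (e^{iσ₋}/(√2 z))·f₋^R(z) = (α + e^{iσ₊}β)/(√2 z); and −(e^{−iσ₋}z/√2)·f₋^L(z) + (λ + z/√2)·f₋^R(z) = −λβ. -/
noncomputable section
open Complex

set_option maxHeartbeats 1000000 in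
theorem stmt_4
    (σp σm : ℝ) (hσp : σp ∈ Set.Ico 0 (2 * Real.pi)) (hσm : σm ∈ Set.Ico 0 (2 * Real.pi))
    (lam : ℂ) (Ψ : ℤ → ℂ × ℂ)
    (hΨ : ∀ x : ℤ, lam • Ψ x = qwStep σp σm Ψ x)
    (α β : ℂ) (hα : α = (Ψ 0).1) (hβ : β = (Ψ 0).2)
    (z : ℂ) (hz : z ≠ 0)
    (hsumLp : Summable fun x : ℕ => (Ψ ((x : ℤ) + 1)).1 * z ^ (x + 1))
    (hsumRp : Summable fun x : ℕ => (Ψ ((x : ℤ) + 1)).2 * z ^ (x + 1))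
    (hsumLm : Summable fun x : ℕ => (Ψ (-(x : ℤ) - 1)).1 * z⁻¹ ^ (x + 1))
    (hsumRm : Summable fun x : ℕ => (Ψ (-(x : ℤ) - 1)).2 * z⁻¹ ^ (x + 1))
    (fLp fRp fLm fRm : ℂ)
    (hfLp : fLp = ∑' x : ℕ, (Ψ ((x : ℤ) + 1)).1 * z ^ (x + 1))
    (hfRp : fRp = ∑' x : ℕ, (Ψ ((x : ℤ) + 1)).2 * z ^ (x + 1))
    (hfLm : fLm = ∑' x : ℕ, (Ψ (-(x : ℤ) - 1)).1 * z⁻¹ ^ (x + 1))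
    (hfRm : fRm = ∑' x : ℕ, (Ψ (-(x : ℤ) - 1)).2 * z⁻¹ ^ (x + 1)) :
    (lam - 1 / ((Real.sqrt 2 : ℂ) * z)) * fLp
        - (Complex.exp (Complex.I * (σp : ℂ)) / ((Real.sqrt 2 : ℂ) * z)) * fRp = -lam * α ∧
    -(Complex.exp (-Complex.I * (σp : ℂ)) * z / (Real.sqrt 2 : ℂ)) * fLp
        + (lam + z / (Real.sqrt 2 : ℂ)) * fRp
        = (Complex.exp (-Complex.I * (σp : ℂ)) * α - β) * z / (Real.sqrt 2 : ℂ) ∧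
    (lam - 1 / ((Real.sqrt 2 : ℂ) * z)) * fLm
        - (Complex.exp (Complex.I * (σm : ℂ)) / ((Real.sqrt 2 : ℂ) * z)) * fRm
        = (α + Complex.exp (Complex.I * (σp : ℂ)) * β) / ((Real.sqrt 2 : ℂ) * z) ∧
    -(Complex.exp (-Complex.I * (σm : ℂ)) * z / (Real.sqrt 2 : ℂ)) * fLm
        + (lam + z / (Real.sqrt 2 : ℂ)) * fRm = -lam * β := by

  subst hα hβ hfLp hfRp hfLm hfRm
  have hs : ((Real.sqrt 2 : ℝ) : ℂ) ≠ 0 := by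
    simp only [ne_eq, Complex.ofReal_eq_zero]
    positivity
  have hzw : z * z⁻¹ = 1 := mul_inv_cancel₀ hz
  set s : ℂ := ((Real.sqrt 2 : ℝ) : ℂ) with hsdef
  set Ep := Complex.exp (Complex.I * (σp : ℂ)) with hEp
  set Epm := Complex.exp (-Complex.I * (σp : ℂ)) with hEpm
  set Em := Complex.exp (Complex.I * (σm : ℂ)) with hEm
  set Emm := Complex.exp (-Complex.I * (σm : ℂ)) with hEmm
  have hL : ∀ x : ℤ, lam * (Ψ x).1
      = (Ψ (x+1)).1 / s + Complex.exp (Complex.I * (qwPhase σp σm (x+1) : ℂ)) * (Ψ (x+1)).2 / s := by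
    intro x
    simpa [qwStep, smul_eq_mul] using congrArg Prod.fst (hΨ x)
  have hR : ∀ x : ℤ, lam * (Ψ x).2
      = Complex.exp (-Complex.I * (qwPhase σp σm (x-1) : ℂ)) * (Ψ (x-1)).1 / s - (Ψ (x-1)).2 / s := by
    intro x
    simpa [qwStep, smul_eq_mul] using congrArg Prod.snd (hΨ x)
  have hphp : ∀ x : ℤ, 0 ≤ x → qwPhase σp σm x = σp := fun x hx => if_pos hx
  have hphm : ∀ x : ℤ, x < 0 → qwPhase σp σm x = σm := fun x hx => if_neg (by omega)
  -- shifted summability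
  have hshLp : Summable (fun n : ℕ => (Ψ ((((n+1:ℕ)):ℤ)+1)).1 * z ^ ((n+1)+1)) :=
    (summable_nat_add_iff (f := fun x : ℕ => (Ψ ((x:ℤ)+1)).1 * z ^ (x+1)) 1).mpr hsumLp
  have hshRp : Summable (fun n : ℕ => (Ψ ((((n+1:ℕ)):ℤ)+1)).2 * z ^ ((n+1)+1)) :=
    (summable_nat_add_iff (f := fun x : ℕ => (Ψ ((x:ℤ)+1)).2 * z ^ (x+1)) 1).mpr hsumRp
  have hshLm : Summable (fun n : ℕ => (Ψ (-(((n+1:ℕ)):ℤ)-1)).1 * z⁻¹ ^ ((n+1)+1)) :=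
    (summable_nat_add_iff (f := fun x : ℕ => (Ψ (-(x:ℤ)-1)).1 * z⁻¹ ^ (x+1)) 1).mpr hsumLm
  have hshRm : Summable (fun n : ℕ => (Ψ (-(((n+1:ℕ)):ℤ)-1)).2 * z⁻¹ ^ ((n+1)+1)) :=
    (summable_nat_add_iff (f := fun x : ℕ => (Ψ (-(x:ℤ)-1)).2 * z⁻¹ ^ (x+1)) 1).mpr hsumRm
  -- summability at 0 base
  have hsumL0 : Summable (fun n : ℕ => (Ψ (n:ℤ)).1 * z ^ n) := by
    refine (summable_nat_add_iff 1).mp (hsumLp.congr fun n => ?_)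
    push_cast
    ring_nf
  have hsumR0 : Summable (fun n : ℕ => (Ψ (n:ℤ)).2 * z ^ n) := by
    refine (summable_nat_add_iff 1).mp (hsumRp.congr fun n => ?_)
    push_cast
    ring_nf
  -- tail sums
  have tailLp : (∑' n : ℕ, (Ψ ((((n+1:ℕ)):ℤ)+1)).1 * z ^ ((n+1)+1))
      = (∑' x : ℕ, (Ψ ((x : ℤ) + 1)).1 * z ^ (x + 1)) - (Ψ 1).1 * z := by
    rw [Summable.tsum_eq_zero_add hsumLp]
    push_cast
    ring
  have tailRp : (∑' n : ℕ, (Ψ ((((n+1:ℕ)):ℤ)+1)).2 * z ^ ((n+1)+1))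
      = (∑' x : ℕ, (Ψ ((x : ℤ) + 1)).2 * z ^ (x + 1)) - (Ψ 1).2 * z := by
    rw [Summable.tsum_eq_zero_add hsumRp]
    push_cast
    ring
  have tailLm : (∑' n : ℕ, (Ψ (-(((n+1:ℕ)):ℤ)-1)).1 * z⁻¹ ^ ((n+1)+1))
      = (∑' x : ℕ, (Ψ (-(x : ℤ) - 1)).1 * z⁻¹ ^ (x + 1)) - (Ψ (-1)).1 * z⁻¹ := by
    rw [Summable.tsum_eq_zero_add hsumLm]
    push_cast
    ring
  have tailRm : (∑' n : ℕ, (Ψ (-(((n+1:ℕ)):ℤ)-1)).2 * z⁻¹ ^ ((n+1)+1))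
      = (∑' x : ℕ, (Ψ (-(x : ℤ) - 1)).2 * z⁻¹ ^ (x + 1)) - (Ψ (-1)).2 * z⁻¹ := by
    rw [Summable.tsum_eq_zero_add hsumRm]
    push_cast
    ring
  have tsumL0 : (∑' n : ℕ, (Ψ (n:ℤ)).1 * z ^ n)
      = (Ψ 0).1 + (∑' x : ℕ, (Ψ ((x : ℤ) + 1)).1 * z ^ (x + 1)) := by
    rw [Summable.tsum_eq_zero_add hsumL0]
    push_cast
    ring_nf
  have tsumR0 : (∑' n : ℕ, (Ψ (n:ℤ)).2 * z ^ n)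
      = (Ψ 0).2 + (∑' x : ℕ, (Ψ ((x : ℤ) + 1)).2 * z ^ (x + 1)) := by
    rw [Summable.tsum_eq_zero_add hsumR0]
    push_cast
    ring_nf
  -- boundary equations
  have h0L := hL 0
  rw [zero_add, hphp 1 (by omega)] at h0L
  have h0R := hR 0
  rw [zero_sub, hphm (-1) (by omega)] at h0R
  have h1L := hL (-1)
  rw [neg_add_cancel, hphp 0 (by omega)] at h1L
  -- eq 1
  have key1 : ∀ n : ℕ, lam * ((Ψ ((n:ℤ)+1)).1 * z ^ (n+1))
      = (Ψ ((((n+1:ℕ)):ℤ)+1)).1 * z ^ ((n+1)+1) * (z⁻¹/s)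
        + Ep * ((Ψ ((((n+1:ℕ)):ℤ)+1)).2 * z ^ ((n+1)+1)) * (z⁻¹/s) := by
    intro n
    have h := hL ((n:ℤ)+1)
    rw [hphp ((n:ℤ)+1+1) (by omega)] at h
    have hc : ((((n+1:ℕ)):ℤ)+1) = ((n:ℤ)+1+1) := by push_cast; ring
    rw [hc]
    linear_combination z ^ (n+1) * h
      - (z ^ (n+1) * ((Ψ ((n:ℤ)+1+1)).1 + Ep * (Ψ ((n:ℤ)+1+1)).2) / s) * hzw
  have e1 : lam * (∑' x : ℕ, (Ψ ((x : ℤ) + 1)).1 * z ^ (x + 1))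
      = ((∑' x : ℕ, (Ψ ((x : ℤ) + 1)).1 * z ^ (x + 1)) - (Ψ 1).1 * z) * (z⁻¹/s)
        + Ep * ((∑' x : ℕ, (Ψ ((x : ℤ) + 1)).2 * z ^ (x + 1)) - (Ψ 1).2 * z) * (z⁻¹/s) := by
    rw [← tsum_mul_left, tsum_congr key1,
      Summable.tsum_add (hshLp.mul_right _) ((hshRp.mul_left Ep).mul_right _),
      tsum_mul_right, tsum_mul_right, tsum_mul_left, tailLp, tailRp]
  have g1 : (lam - 1 / (s * z)) * (∑' x : ℕ, (Ψ ((x : ℤ) + 1)).1 * z ^ (x + 1))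
      - (Ep / (s * z)) * (∑' x : ℕ, (Ψ ((x : ℤ) + 1)).2 * z ^ (x + 1)) = -lam * (Ψ 0).1 := by
    linear_combination e1 + h0L - (((Ψ 1).1 + Ep * (Ψ 1).2)/s) * hzw
  -- eq 2
  have key2 : ∀ n : ℕ, lam * ((Ψ ((n:ℤ)+1)).2 * z ^ (n+1))
      = Epm * ((Ψ (n:ℤ)).1 * z ^ n) * (z/s) - ((Ψ (n:ℤ)).2 * z ^ n) * (z/s) := by
    intro n
    have h := hR ((n:ℤ)+1)
    rw [add_sub_cancel_right, hphp (n:ℤ) (by omega)] at h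
    linear_combination z ^ (n+1) * h
  have e2 : lam * (∑' x : ℕ, (Ψ ((x : ℤ) + 1)).2 * z ^ (x + 1))
      = Epm * ((Ψ 0).1 + (∑' x : ℕ, (Ψ ((x : ℤ) + 1)).1 * z ^ (x + 1))) * (z/s)
        - ((Ψ 0).2 + (∑' x : ℕ, (Ψ ((x : ℤ) + 1)).2 * z ^ (x + 1))) * (z/s) := by
    rw [← tsum_mul_left, tsum_congr key2,
      Summable.tsum_sub ((hsumL0.mul_left Epm).mul_right _) (hsumR0.mul_right _),
      tsum_mul_right, tsum_mul_right, tsum_mul_left, tsumL0, tsumR0]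
  have g2 : -(Epm * z / s) * (∑' x : ℕ, (Ψ ((x : ℤ) + 1)).1 * z ^ (x + 1))
      + (lam + z / s) * (∑' x : ℕ, (Ψ ((x : ℤ) + 1)).2 * z ^ (x + 1))
      = (Epm * (Ψ 0).1 - (Ψ 0).2) * z / s := by
    linear_combination e2
  -- eq 3
  have key3 : ∀ n : ℕ, lam * ((Ψ (-(((n+1:ℕ)):ℤ)-1)).1 * z⁻¹ ^ ((n+1)+1))
      = ((Ψ (-(n:ℤ)-1)).1 * z⁻¹ ^ (n+1)) * (z⁻¹/s)
        + Em * ((Ψ (-(n:ℤ)-1)).2 * z⁻¹ ^ (n+1)) * (z⁻¹/s) := by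
    intro n
    have h := hL (-(n:ℤ)-1-1)
    rw [show (-(n:ℤ)-1-1+1) = (-(n:ℤ)-1) by ring, hphm (-(n:ℤ)-1) (by omega)] at h
    rw [show (-(((n+1:ℕ)):ℤ)-1) = (-(n:ℤ)-1-1) by push_cast; ring]
    linear_combination z⁻¹ ^ ((n+1)+1) * h
  have e3 : lam * (∑' x : ℕ, (Ψ (-(x : ℤ) - 1)).1 * z⁻¹ ^ (x + 1))
      = lam * (Ψ (-1)).1 * z⁻¹
        + (∑' x : ℕ, (Ψ (-(x : ℤ) - 1)).1 * z⁻¹ ^ (x + 1)) * (z⁻¹/s)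
        + Em * (∑' x : ℕ, (Ψ (-(x : ℤ) - 1)).2 * z⁻¹ ^ (x + 1)) * (z⁻¹/s) := by
    rw [← tsum_mul_left, Summable.tsum_eq_zero_add (hsumLm.mul_left lam), tsum_congr key3,
      Summable.tsum_add (hsumLm.mul_right _) ((hsumRm.mul_left Em).mul_right _),
      tsum_mul_right, tsum_mul_right, tsum_mul_left]
    push_cast
    ring
  have g3 : (lam - 1 / (s * z)) * (∑' x : ℕ, (Ψ (-(x : ℤ) - 1)).1 * z⁻¹ ^ (x + 1))
      - (Em / (s * z)) * (∑' x : ℕ, (Ψ (-(x : ℤ) - 1)).2 * z⁻¹ ^ (x + 1))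
      = ((Ψ 0).1 + Ep * (Ψ 0).2) / (s * z) := by
    linear_combination e3 + z⁻¹ * h1L
  -- eq 4
  have key4 : ∀ n : ℕ, lam * ((Ψ (-(n:ℤ)-1)).2 * z⁻¹ ^ (n+1))
      = Emm * ((Ψ (-(((n+1:ℕ)):ℤ)-1)).1 * z⁻¹ ^ ((n+1)+1)) * (z/s)
        - ((Ψ (-(((n+1:ℕ)):ℤ)-1)).2 * z⁻¹ ^ ((n+1)+1)) * (z/s) := by
    intro n
    have h := hR (-(n:ℤ)-1)
    rw [hphm (-(n:ℤ)-1-1) (by omega)] at h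
    rw [show (-(((n+1:ℕ)):ℤ)-1) = (-(n:ℤ)-1-1) by push_cast; ring]
    linear_combination z⁻¹ ^ (n+1) * h
      - (z⁻¹ ^ (n+1) * (Emm * (Ψ (-(n:ℤ)-1-1)).1 - (Ψ (-(n:ℤ)-1-1)).2)/s) * hzw
  have e4 : lam * (∑' x : ℕ, (Ψ (-(x : ℤ) - 1)).2 * z⁻¹ ^ (x + 1))
      = Emm * ((∑' x : ℕ, (Ψ (-(x : ℤ) - 1)).1 * z⁻¹ ^ (x + 1)) - (Ψ (-1)).1 * z⁻¹) * (z/s)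
        - ((∑' x : ℕ, (Ψ (-(x : ℤ) - 1)).2 * z⁻¹ ^ (x + 1)) - (Ψ (-1)).2 * z⁻¹) * (z/s) := by
    rw [← tsum_mul_left, tsum_congr key4,
      Summable.tsum_sub ((hshLm.mul_left Emm).mul_right _) (hshRm.mul_right _),
      tsum_mul_right, tsum_mul_right, tsum_mul_left, tailLm, tailRm]
  have g4 : -(Emm * z / s) * (∑' x : ℕ, (Ψ (-(x : ℤ) - 1)).1 * z⁻¹ ^ (x + 1))
      + (lam + z / s) * (∑' x : ℕ, (Ψ (-(x : ℤ) - 1)).2 * z⁻¹ ^ (x + 1))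
      = -lam * (Ψ 0).2 := by
    linear_combination e4 + h0R - ((Emm * (Ψ (-1)).1 - (Ψ (-1)).2)/s) * hzw
  exact ⟨g1, g2, g3, g4⟩
end
end

section
/- (Stationary measures of the chiral-symmetric two-phase QW.) Consider the complete two-phase QW with σ₊ = 3π/2 and σ₋ = π/2, and let c > 0. Then for each λ ∈ {i, −i} there exists a generalized eigenvector Ψ with eigenvalue λ whose stationary measure is μ(x) = c²(2+√2)·(1/(3+2√2))^x for x ≥ 0 and μ(x) = c²(2+√2)·(1/(3+2√2))^{|x|−1} for x ≤ −1 (exponentially localized around the origin), and also a generalized eigenvector with eigenvalue λ whose stationary measure is μ(x) = c²(2−√2)·(1/(3−2√2))^x for x ≥ 0 and μ(x) = c²(2−√2)·(1/(3−2√2))^{|x|−1} for x ≤ −1 (exponentially diverging). -/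
noncomputable section
open Complex

/-- The stationary measure `μ(x) = ‖Ψ(x)‖² = |Ψ^L(x)|² + |Ψ^R(x)|²`. -/
def statMeasure (Ψ : ℤ → ℂ × ℂ) (x : ℤ) : ℝ :=
  Complex.normSq (Ψ x).1 + Complex.normSq (Ψ x).2

namespace Stmt8Aux

def myPsi (ρ A B C D : ℂ) (x : ℤ) : ℂ × ℂ :=
  if 0 ≤ x then (ρ ^ x.toNat * A, ρ ^ x.toNat * B)
  else ((-ρ) ^ (-x-1).toNat * C, (-ρ) ^ (-x-1).toNat * D)

lemma myPsi_ofNat (ρ A B C D : ℂ) (n : ℕ) :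
    myPsi ρ A B C D (n : ℤ) = (ρ ^ n * A, ρ ^ n * B) := by
  rw [myPsi, if_pos (by positivity)]
  norm_num

lemma myPsi_negSucc (ρ A B C D : ℂ) (n : ℕ) :
    myPsi ρ A B C D (-((n : ℤ)+1)) = ((-ρ) ^ n * C, (-ρ) ^ n * D) := by
  rw [myPsi, if_neg (by omega)]
  have h2 : (-(-((n:ℤ)+1)) - 1).toNat = n := by omega
  rw [h2]

lemma qwPhase_pos (σp σm : ℝ) (x : ℤ) (h : 0 ≤ x) : qwPhase σp σm x = σp := if_pos h

lemma qwPhase_neg (σp σm : ℝ) (x : ℤ) (h : ¬ 0 ≤ x) : qwPhase σp σm x = σm := if_neg h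

lemma exp_I_pi_div_two : Complex.exp (Complex.I * ((Real.pi/2 : ℝ) : ℂ)) = Complex.I := by
  rw [mul_comm, Complex.exp_mul_I]
  push_cast
  rw [Complex.cos_pi_div_two, Complex.sin_pi_div_two]
  ring

lemma exp_I_3pi_div_two :
    Complex.exp (Complex.I * ((3 * Real.pi/2 : ℝ) : ℂ)) = -Complex.I := by
  have h : Complex.I * ((3 * Real.pi/2 : ℝ) : ℂ)
      = (Real.pi : ℂ) * Complex.I + Complex.I * ((Real.pi/2 : ℝ) : ℂ) := by
    push_cast; ring
  rw [h, Complex.exp_add, Complex.exp_pi_mul_I, exp_I_pi_div_two]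
  ring

lemma exp_neg_I_pi_div_two :
    Complex.exp (-Complex.I * ((Real.pi/2 : ℝ) : ℂ)) = -Complex.I := by
  rw [neg_mul, Complex.exp_neg, exp_I_pi_div_two, Complex.inv_I]

lemma exp_neg_I_3pi_div_two :
    Complex.exp (-Complex.I * ((3 * Real.pi/2 : ℝ) : ℂ)) = Complex.I := by
  rw [neg_mul, Complex.exp_neg, exp_I_3pi_div_two, inv_neg, Complex.inv_I, neg_neg]

lemma sqrt2_ne : ((Real.sqrt 2 : ℝ) : ℂ) ≠ 0 := by
  norm_cast
  positivity

lemma eigen (ρ A B C D : ℂ)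
    (h1 : I * (Real.sqrt 2 : ℂ) * A = ρ * (A - I * B))
    (h2 : I * (Real.sqrt 2 : ℂ) * ρ * B = I * A - B)
    (h3 : I * (Real.sqrt 2 : ℂ) * C = A - I * B)
    (h4 : I * (Real.sqrt 2 : ℂ) * B = -I * C - D)
    (h5 : -(I * (Real.sqrt 2 : ℂ)) * ρ * C = C + I * D)
    (h6 : I * (Real.sqrt 2 : ℂ) * D = ρ * (I * C + D)) :
    ∀ x : ℤ, I • myPsi ρ A B C D x
      = qwStep (3 * Real.pi / 2) (Real.pi / 2) (myPsi ρ A B C D) x := by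
  have hs := sqrt2_ne
  intro x
  rcases le_or_gt 0 x with hx | hx
  · obtain ⟨n, rfl⟩ := Int.eq_ofNat_of_zero_le hx
    rw [qwStep, show ((n:ℤ)) + 1 = ((n+1:ℕ) : ℤ) by push_cast; ring,
      qwPhase_pos _ _ _ (by positivity), myPsi_ofNat, myPsi_ofNat, exp_I_3pi_div_two]
    cases n with
    | zero =>
      rw [show ((0:ℕ):ℤ) - 1 = -((0:ℕ):ℤ)-1 by norm_num,
        show (-((0:ℕ):ℤ)-1) = -(((0:ℕ):ℤ)+1) by ring,
        qwPhase_neg _ _ _ (by omega), myPsi_negSucc, exp_neg_I_pi_div_two]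
      refine Prod.ext ?_ ?_
      · show I * (ρ ^ 0 * A) = _
        rw [← add_div, eq_div_iff hs]
        linear_combination h1
      · show I * (ρ ^ 0 * B) = _
        rw [← sub_div, eq_div_iff hs]
        linear_combination h4
    | succ m =>
      rw [show ((m+1:ℕ):ℤ) - 1 = ((m:ℕ):ℤ) by push_cast; ring,
        qwPhase_pos _ _ _ (by positivity), myPsi_ofNat, exp_neg_I_3pi_div_two]
      refine Prod.ext ?_ ?_
      · show I * (ρ ^ (m+1) * A) = _
        rw [← add_div, eq_div_iff hs]
        linear_combination ρ^(m+1) * h1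
      · show I * (ρ ^ (m+1) * B) = _
        rw [← sub_div, eq_div_iff hs]
        linear_combination ρ^m * h2
  · obtain ⟨n, rfl⟩ : ∃ n : ℕ, x = -((n:ℤ)+1) := ⟨(-x-1).toNat, by omega⟩
    rw [qwStep, show (-((n:ℤ)+1)) - 1 = -(((n+1:ℕ):ℤ)+1) by push_cast; ring,
      qwPhase_neg _ _ (-(((n+1:ℕ):ℤ)+1)) (by omega), myPsi_negSucc, myPsi_negSucc,
      exp_neg_I_pi_div_two]
    cases n with
    | zero =>
      rw [show (-(((0:ℕ):ℤ)+1)) + 1 = ((0:ℕ):ℤ) by norm_num,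
        qwPhase_pos _ _ _ (by positivity), myPsi_ofNat, exp_I_3pi_div_two]
      refine Prod.ext ?_ ?_
      · show I * ((-ρ) ^ 0 * C) = _
        rw [← add_div, eq_div_iff hs]
        linear_combination h3
      · show I * ((-ρ) ^ 0 * D) = _
        rw [← sub_div, eq_div_iff hs]
        linear_combination h6
    | succ m =>
      rw [show (-(((m+1:ℕ):ℤ)+1)) + 1 = -(((m:ℕ):ℤ)+1) by push_cast; ring,
        qwPhase_neg _ _ _ (by omega), myPsi_negSucc, exp_I_pi_div_two]
      refine Prod.ext ?_ ?_
      · show I * ((-ρ) ^ (m+1) * C) = _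
        rw [← add_div, eq_div_iff hs]
        linear_combination (-ρ)^m * h5
      · show I * ((-ρ) ^ (m+1) * D) = _
        rw [← sub_div, eq_div_iff hs]
        linear_combination (-ρ)^(m+1) * h6



lemma measure_myPsi (ρ A B C D : ℂ) (x : ℤ) :
    statMeasure (myPsi ρ A B C D) x =
      if 0 ≤ x then (normSq ρ) ^ x.natAbs * (normSq A + normSq B)
      else (normSq ρ) ^ (x.natAbs - 1) * (normSq C + normSq D) := by
  rcases le_or_gt 0 x with hx | hx
  · obtain ⟨n, rfl⟩ := Int.eq_ofNat_of_zero_le hx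
    rw [statMeasure, myPsi_ofNat, if_pos (by positivity)]
    simp only [Complex.normSq_mul, map_pow, Int.natAbs_natCast]
    ring
  · obtain ⟨n, rfl⟩ : ∃ n : ℕ, x = -((n:ℤ)+1) := ⟨(-x-1).toNat, by omega⟩
    rw [statMeasure, myPsi_negSucc, if_neg (by omega)]
    have hn : (-((n:ℤ)+1)).natAbs - 1 = n := by omega
    simp only [Complex.normSq_mul, map_pow, Complex.normSq_neg, hn]
    ring

def qflip (Ψ : ℤ → ℂ × ℂ) (x : ℤ) : ℂ × ℂ :=
  ((-1:ℂ) ^ x * (Ψ x).1, (-1:ℂ) ^ x * (Ψ x).2)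

lemma qflip_eigen (σp σm : ℝ) (Ψ : ℤ → ℂ × ℂ)
    (h : ∀ x : ℤ, I • Ψ x = qwStep σp σm Ψ x) :
    ∀ x : ℤ, (-I) • qflip Ψ x = qwStep σp σm (qflip Ψ) x := by
  intro x
  have hx1 : (-1:ℂ) ^ (x+1) = -((-1:ℂ) ^ x) := by
    rw [zpow_add_one₀ (by norm_num : (-1:ℂ) ≠ 0)]; ring
  have hx2 : (-1:ℂ) ^ (x-1) = -((-1:ℂ) ^ x) := by
    rw [zpow_sub_one₀ (by norm_num : (-1:ℂ) ≠ 0)]; norm_num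
  have h1 := congrArg Prod.fst (h x)
  have h2 := congrArg Prod.snd (h x)
  simp only [qwStep] at h1 h2
  have h1' : I * (Ψ x).1 = (Ψ (x+1)).1 / (Real.sqrt 2 : ℂ)
      + Complex.exp (Complex.I * (qwPhase σp σm (x+1) : ℂ)) * (Ψ (x+1)).2 / (Real.sqrt 2 : ℂ) := h1
  have h2' : I * (Ψ x).2 = Complex.exp (-Complex.I * (qwPhase σp σm (x-1) : ℂ)) * (Ψ (x-1)).1 / (Real.sqrt 2 : ℂ)
      - (Ψ (x-1)).2 / (Real.sqrt 2 : ℂ) := h2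
  rw [qwStep]
  refine Prod.ext ?_ ?_
  · show -I * ((-1:ℂ) ^ x * (Ψ x).1) = _
    show _ = ((-1:ℂ) ^ (x+1) * (Ψ (x+1)).1) / (Real.sqrt 2 : ℂ)
      + Complex.exp (Complex.I * (qwPhase σp σm (x+1) : ℂ))
        * ((-1:ℂ) ^ (x+1) * (Ψ (x+1)).2) / (Real.sqrt 2 : ℂ)
    rw [hx1]
    linear_combination (-((-1:ℂ) ^ x)) * h1'
  · show -I * ((-1:ℂ) ^ x * (Ψ x).2) = _
    show _ = Complex.exp (-Complex.I * (qwPhase σp σm (x-1) : ℂ))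
        * ((-1:ℂ) ^ (x-1) * (Ψ (x-1)).1) / (Real.sqrt 2 : ℂ)
      - ((-1:ℂ) ^ (x-1) * (Ψ (x-1)).2) / (Real.sqrt 2 : ℂ)
    rw [hx2]
    linear_combination (-((-1:ℂ) ^ x)) * h2'

lemma qflip_measure (Ψ : ℤ → ℂ × ℂ) (x : ℤ) :
    statMeasure (qflip Ψ) x = statMeasure Ψ x := by
  have hone : Complex.normSq ((-1:ℂ) ^ x) = 1 := by
    rw [map_zpow₀ Complex.normSq]
    norm_num
  simp [statMeasure, qflip, Complex.normSq_mul, hone]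


lemma promote (σp σm : ℝ) (Ψ : ℤ → ℂ × ℂ) (f : ℤ → ℝ) (h0 : (Ψ 0).1 ≠ 0)
    (heig : ∀ x : ℤ, I • Ψ x = qwStep σp σm Ψ x)
    (hmeas : ∀ x : ℤ, statMeasure Ψ x = f x)
    (lam : ℂ) (hlam : lam = I ∨ lam = -I) :
    ∃ Φ : ℤ → ℂ × ℂ, Φ ≠ 0 ∧ (∀ x : ℤ, lam • Φ x = qwStep σp σm Φ x) ∧
      ∀ x : ℤ, statMeasure Φ x = f x := by
  rcases hlam with rfl | rfl
  · exact ⟨Ψ, fun h => h0 (by rw [h]; rfl), heig, hmeas⟩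
  · refine ⟨qflip Ψ, ?_, qflip_eigen _ _ _ heig, fun x => (qflip_measure Ψ x).trans (hmeas x)⟩
    intro h
    apply h0
    have h2 := congrArg Prod.fst (congrFun h 0)
    simpa [qflip] using h2

lemma hs2C : ((Real.sqrt 2 : ℝ) : ℂ) ^ 2 = 2 := by
  rw [← Complex.ofReal_pow, Real.sq_sqrt (by norm_num : (0:ℝ) ≤ 2)]
  norm_num

lemma ht2 : (Real.sqrt 2 : ℝ) ^ 2 = 2 := Real.sq_sqrt (by norm_num)

lemma sqrt2_pos : (0:ℝ) < Real.sqrt 2 := by positivity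

/-- the localized eigenvector -/
def psiLoc (c : ℝ) : ℤ → ℂ × ℂ :=
  myPsi (I * (((Real.sqrt 2 : ℝ) : ℂ) - 1))
    ((c / Real.sqrt 2 : ℝ) : ℂ)
    (I * (((Real.sqrt 2 : ℝ) : ℂ) + 1) * ((c / Real.sqrt 2 : ℝ) : ℂ))
    (-(I * (((Real.sqrt 2 : ℝ) : ℂ) + 1) * ((c / Real.sqrt 2 : ℝ) : ℂ)))
    ((c / Real.sqrt 2 : ℝ) : ℂ)

/-- the diverging eigenvector -/
def psiDiv (c : ℝ) : ℤ → ℂ × ℂ :=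
  myPsi (I * (((Real.sqrt 2 : ℝ) : ℂ) + 1))
    ((c / Real.sqrt 2 : ℝ) : ℂ)
    (-(I * (((Real.sqrt 2 : ℝ) : ℂ) - 1) * ((c / Real.sqrt 2 : ℝ) : ℂ)))
    (-(I * (((Real.sqrt 2 : ℝ) : ℂ) - 1) * ((c / Real.sqrt 2 : ℝ) : ℂ)))
    (-((c / Real.sqrt 2 : ℝ) : ℂ))

lemma psiLoc_eigen (c : ℝ) :
    ∀ x : ℤ, I • psiLoc c x = qwStep (3 * Real.pi / 2) (Real.pi / 2) (psiLoc c) x := by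
  set s : ℂ := ((Real.sqrt 2 : ℝ) : ℂ) with hsdef
  set a : ℂ := ((c / Real.sqrt 2 : ℝ) : ℂ) with hadef
  have hI : I ^ 2 = -1 := Complex.I_sq
  have hs2 : s ^ 2 = 2 := hs2C
  refine eigen _ _ _ _ _ ?_ ?_ ?_ ?_ ?_ ?_
  · linear_combination (I*s^2*a - I*a) * hI + (-(I*a)) * hs2
  · linear_combination (I*s^3*a - I*s*a) * hI + (-(I*s*a)) * hs2
  · linear_combination (a - s^2*a) * hI + a * hs2
  · linear_combination (s^2*a - a) * hI + (-a) * hs2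
  · linear_combination (I*s^3*a - I*s*a) * hI + (-(I*s*a)) * hs2
  · linear_combination (I*s^2*a - I*a) * hI + (-(I*a)) * hs2

lemma psiDiv_eigen (c : ℝ) :
    ∀ x : ℤ, I • psiDiv c x = qwStep (3 * Real.pi / 2) (Real.pi / 2) (psiDiv c) x := by
  set s : ℂ := ((Real.sqrt 2 : ℝ) : ℂ) with hsdef
  set a : ℂ := ((c / Real.sqrt 2 : ℝ) : ℂ) with hadef
  have hI : I ^ 2 = -1 := Complex.I_sq
  have hs2 : s ^ 2 = 2 := hs2C
  refine eigen _ _ _ _ _ ?_ ?_ ?_ ?_ ?_ ?_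
  · linear_combination (I*a - I*s^2*a) * hI + (I*a) * hs2
  · linear_combination (I*s*a - I*s^3*a) * hI + (I*s*a) * hs2
  · linear_combination (a - s^2*a) * hI + a * hs2
  · linear_combination (a - s^2*a) * hI + a * hs2
  · linear_combination (I*s^3*a - I*s*a) * hI + (-(I*s*a)) * hs2
  · linear_combination (I*s^2*a - I*a) * hI + (-(I*a)) * hs2

lemma normSq_real_mul (r : ℝ) : Complex.normSq ((r : ℝ) : ℂ) = r ^ 2 := by
  rw [Complex.normSq_ofReal]; ring

lemma psiLoc_measure (c : ℝ) (x : ℤ) :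
    statMeasure (psiLoc c) x =
      if 0 ≤ x then c ^ 2 * (2 + Real.sqrt 2) * (1 / (3 + 2 * Real.sqrt 2)) ^ x.natAbs
      else c ^ 2 * (2 + Real.sqrt 2) * (1 / (3 + 2 * Real.sqrt 2)) ^ (x.natAbs - 1) := by
  have ht := ht2
  have htp := sqrt2_pos
  have h3 : (0:ℝ) < 3 + 2 * Real.sqrt 2 := by positivity
  have hρ : Complex.normSq (I * (((Real.sqrt 2 : ℝ) : ℂ) - 1)) = 1 / (3 + 2 * Real.sqrt 2) := by
    have : (((Real.sqrt 2 : ℝ) : ℂ) - 1) = (((Real.sqrt 2 - 1 : ℝ)) : ℂ) := by push_cast; ring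
    rw [Complex.normSq_mul, Complex.normSq_I, this, Complex.normSq_ofReal]
    field_simp
    nlinarith [ht]
  have hsum : Complex.normSq (((c / Real.sqrt 2 : ℝ) : ℂ))
      + Complex.normSq (I * (((Real.sqrt 2 : ℝ) : ℂ) + 1) * ((c / Real.sqrt 2 : ℝ) : ℂ))
      = c ^ 2 * (2 + Real.sqrt 2) := by
    have h1 : (((Real.sqrt 2 : ℝ) : ℂ) + 1) = (((Real.sqrt 2 + 1 : ℝ)) : ℂ) := by push_cast; ring
    rw [Complex.normSq_mul, Complex.normSq_mul, Complex.normSq_I, h1,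
      Complex.normSq_ofReal, Complex.normSq_ofReal]
    field_simp
    linear_combination (-(c^2*(Real.sqrt 2 + 1))) * ht
  have hsum2 : Complex.normSq (-(I * (((Real.sqrt 2 : ℝ) : ℂ) + 1) * ((c / Real.sqrt 2 : ℝ) : ℂ)))
      + Complex.normSq (((c / Real.sqrt 2 : ℝ) : ℂ)) = c ^ 2 * (2 + Real.sqrt 2) := by
    rw [Complex.normSq_neg, add_comm]
    exact hsum
  rw [psiLoc, measure_myPsi]
  split
  · rw [hρ, hsum]; ring
  · rw [hρ, hsum2]; ring

lemma psiDiv_measure (c : ℝ) (x : ℤ) :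
    statMeasure (psiDiv c) x =
      if 0 ≤ x then c ^ 2 * (2 - Real.sqrt 2) * (1 / (3 - 2 * Real.sqrt 2)) ^ x.natAbs
      else c ^ 2 * (2 - Real.sqrt 2) * (1 / (3 - 2 * Real.sqrt 2)) ^ (x.natAbs - 1) := by
  have ht := ht2
  have htp := sqrt2_pos
  have h3 : (3:ℝ) - 2 * Real.sqrt 2 ≠ 0 := by
    intro h
    nlinarith [ht]
  have hρ : Complex.normSq (I * (((Real.sqrt 2 : ℝ) : ℂ) + 1)) = 1 / (3 - 2 * Real.sqrt 2) := by
    have : (((Real.sqrt 2 : ℝ) : ℂ) + 1) = (((Real.sqrt 2 + 1 : ℝ)) : ℂ) := by push_cast; ring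
    rw [Complex.normSq_mul, Complex.normSq_I, this, Complex.normSq_ofReal]
    field_simp
    rw [eq_div_iff (by intro h; apply h3; linarith)]
    linear_combination (-(2 * Real.sqrt 2 + 1)) * ht
  have hsum : Complex.normSq (((c / Real.sqrt 2 : ℝ) : ℂ))
      + Complex.normSq (-(I * (((Real.sqrt 2 : ℝ) : ℂ) - 1) * ((c / Real.sqrt 2 : ℝ) : ℂ)))
      = c ^ 2 * (2 - Real.sqrt 2) := by
    have h1 : (((Real.sqrt 2 : ℝ) : ℂ) - 1) = (((Real.sqrt 2 - 1 : ℝ)) : ℂ) := by push_cast; ring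
    rw [Complex.normSq_neg, Complex.normSq_mul, Complex.normSq_mul, Complex.normSq_I, h1,
      Complex.normSq_ofReal, Complex.normSq_ofReal]
    field_simp
    linear_combination (c^2*(Real.sqrt 2 - 1)) * ht
  have hsum2 : Complex.normSq (-(I * (((Real.sqrt 2 : ℝ) : ℂ) - 1) * ((c / Real.sqrt 2 : ℝ) : ℂ)))
      + Complex.normSq (-((c / Real.sqrt 2 : ℝ) : ℂ)) = c ^ 2 * (2 - Real.sqrt 2) := by
    rw [Complex.normSq_neg ((c / Real.sqrt 2 : ℝ) : ℂ), add_comm]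
    exact hsum
  rw [psiDiv, measure_myPsi]
  split
  · rw [hρ, hsum]; ring
  · rw [hρ, hsum2]; ring

lemma a_ne (c : ℝ) (hc : 0 < c) : (((c / Real.sqrt 2 : ℝ) : ℂ)) ≠ 0 := by
  rw [Complex.ofReal_ne_zero]
  positivity

lemma psiLoc_ne (c : ℝ) (hc : 0 < c) : (psiLoc c 0).1 ≠ 0 := by
  have h0 : psiLoc c 0 = psiLoc c ((0:ℕ) : ℤ) := by norm_num
  rw [h0, psiLoc, myPsi_ofNat]
  simpa using a_ne c hc

lemma psiDiv_ne (c : ℝ) (hc : 0 < c) : (psiDiv c 0).1 ≠ 0 := by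
  have h0 : psiDiv c 0 = psiDiv c ((0:ℕ) : ℤ) := by norm_num
  rw [h0, psiDiv, myPsi_ofNat]
  simpa using a_ne c hc

end Stmt8Aux

theorem stmt_8 (c : ℝ) (hc : 0 < c) :
    ∀ lam : ℂ, (lam = Complex.I ∨ lam = -Complex.I) →
      (∃ Ψ : ℤ → ℂ × ℂ, Ψ ≠ 0 ∧
        (∀ x : ℤ, lam • Ψ x = qwStep (3 * Real.pi / 2) (Real.pi / 2) Ψ x) ∧
        (∀ x : ℤ, statMeasure Ψ x =
          if 0 ≤ x then c ^ 2 * (2 + Real.sqrt 2) * (1 / (3 + 2 * Real.sqrt 2)) ^ x.natAbs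
          else c ^ 2 * (2 + Real.sqrt 2) * (1 / (3 + 2 * Real.sqrt 2)) ^ (x.natAbs - 1))) ∧
      (∃ Ψ : ℤ → ℂ × ℂ, Ψ ≠ 0 ∧
        (∀ x : ℤ, lam • Ψ x = qwStep (3 * Real.pi / 2) (Real.pi / 2) Ψ x) ∧
        (∀ x : ℤ, statMeasure Ψ x =
          if 0 ≤ x then c ^ 2 * (2 - Real.sqrt 2) * (1 / (3 - 2 * Real.sqrt 2)) ^ x.natAbs
          else c ^ 2 * (2 - Real.sqrt 2) * (1 / (3 - 2 * Real.sqrt 2)) ^ (x.natAbs - 1))) := by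
  intro lam hlam
  constructor
  · exact Stmt8Aux.promote _ _ (Stmt8Aux.psiLoc c) _ (Stmt8Aux.psiLoc_ne c hc)
      (Stmt8Aux.psiLoc_eigen c) (Stmt8Aux.psiLoc_measure c) lam hlam
  · exact Stmt8Aux.promote _ _ (Stmt8Aux.psiDiv c) _ (Stmt8Aux.psiDiv_ne c hc)
      (Stmt8Aux.psiDiv_eigen c) (Stmt8Aux.psiDiv_measure c) lam hlam
end
end

section
/- (Stationary measures of the two-phase QW without relevant symmetries.) Consider the complete two-phase QW with σ₊ = π and σ₋ = π/2, and let c > 0. Then for each λ ∈ ℂ with λ² = −1/2 + (√3/2)i there exists a generalized eigenvector Ψ with eigenvalue λ whose stationary measure is μ(x) = (c²/2)(3+√3)·(1/(2+√3))^x for x ≥ 0 and μ(x) = (c²/2)(3+√3)·(1/(2+√3))^{|x|−1} for x ≤ −1 (exponentially localized), and for each λ ∈ ℂ with λ² = −1/2 − (√3/2)i there exists a generalized eigenvector with eigenvalue λ whose stationary measure is μ(x) = (c²/2)(3−√3)·(1/(2−√3))^x for x ≥ 0 and μ(x) = (c²/2)(3−√3)·(1/(2−√3))^{|x|−1} for x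 ≤ −1 (exponentially diverging). In particular all such eigenvalues satisfy λ ≠ ±i. -/
noncomputable section
open Complex

namespace Stmt11Aux

noncomputable def rhoc (d : ℝ) : ℂ :=
  (Real.sqrt 2 : ℂ) * ((d : ℂ) - 1) * ((d : ℂ) + Complex.I) / 4
noncomputable def tauc (d : ℝ) : ℂ :=
  (Real.sqrt 2 : ℂ) * ((d : ℂ) + 1) * ((d : ℂ) + Complex.I) / 4
noncomputable def om1c (d : ℝ) : ℂ :=
  (Real.sqrt 2 : ℂ) * (((d : ℂ) - 1) + ((d : ℂ) + 1) * Complex.I) / 4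
noncomputable def v1c (d : ℝ) : ℂ := -((d : ℂ) - 1) * (1 + Complex.I) / 2
noncomputable def kc (c d : ℝ) : ℂ := (c : ℂ) * (1 + (d : ℂ)) / 2

noncomputable def Psi (c d : ℝ) (lam : ℂ) : ℤ → ℂ × ℂ := fun x =>
  if 0 ≤ x then
    (kc c d * (lam * rhoc d) ^ x * v1c d, kc c d * (lam * rhoc d) ^ x)
  else
    (kc c d * (lam * tauc d) ^ (x + 1) * (lam * om1c d),
     kc c d * (lam * tauc d) ^ (x + 1) * (-(lam * rhoc d)))

lemma core (c d : ℝ) (hc : 0 < c) (hd : d ^ 2 = 3) (lam : ℂ)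
    (hlam0 : lam ^ 2 = -(1/2) + ((d / 2 : ℝ) : ℂ) * Complex.I) :
    ∃ Ψ : ℤ → ℂ × ℂ, Ψ ≠ 0 ∧
      (∀ x : ℤ, lam • Ψ x = qwStep Real.pi (Real.pi / 2) Ψ x) ∧
      (∀ x : ℤ, statMeasure Ψ x =
        if 0 ≤ x then c ^ 2 / 2 * (3 + d) * (1 / (2 + d)) ^ x.natAbs
        else c ^ 2 / 2 * (3 + d) * (1 / (2 + d)) ^ (x.natAbs - 1)) := by
  have h2 : Real.sqrt 2 ^ 2 = 2 := Real.sq_sqrt (by norm_num)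
  have hq2 : (Real.sqrt 2 : ℂ) ^ 2 = 2 := by
    rw [← Complex.ofReal_pow, h2]; norm_num
  have hD : (d : ℂ) ^ 2 = 3 := by
    rw [← Complex.ofReal_pow, hd]; norm_num
  have hlam : lam ^ 2 = -(1/2) + (d : ℂ)/2 * Complex.I := by
    rw [hlam0]; push_cast; ring
  have hdlt : d < 2 := by nlinarith
  have hdgt : -2 < d := by nlinarith
  have h2d : (2 : ℝ) + d ≠ 0 := by linarith
  have hq2ne : (Real.sqrt 2 : ℂ) ≠ 0 := by
    exact_mod_cast Complex.ofReal_ne_zero.mpr (by positivity)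
  -- normSq of lam
  have hnlam : Complex.normSq lam = 1 := by
    have e1 : lam ^ 2 = ((-(1/2) : ℝ) : ℂ) + ((d/2 : ℝ) : ℂ) * Complex.I := by
      rw [hlam]; push_cast; ring
    have e2 : Complex.normSq lam ^ 2 = (-(1/2)) ^ 2 + (d/2) ^ 2 := by
      rw [← map_pow, e1, Complex.normSq_add_mul_I]
    have e3 : (Complex.normSq lam - 1) * (Complex.normSq lam + 1) = 0 := by
      linear_combination e2 + (1/4 : ℝ) * hd
    have e4 := Complex.normSq_nonneg lam
    rcases mul_eq_zero.mp e3 with h | h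
    · linarith
    · linarith
  have hnrho : Complex.normSq (rhoc d) = 2 - d := by
    have e : rhoc d = ((Real.sqrt 2 * (d-1) * d / 4 : ℝ) : ℂ)
        + ((Real.sqrt 2 * (d-1) / 4 : ℝ) : ℂ) * Complex.I := by
      unfold rhoc; push_cast; ring
    rw [e, Complex.normSq_add_mul_I]
    linear_combination ((1/16 : ℝ) + (-1/8 : ℝ)*d + (1/8 : ℝ)*d^2 + (-1/8 : ℝ)*d^3 + (1/16 : ℝ)*d^4) * h2 + ((5/8 : ℝ) + (-1/4 : ℝ)*d + (1/8 : ℝ)*d^2) * hd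
  have hntau : Complex.normSq (tauc d) = 2 + d := by
    have e : tauc d = ((Real.sqrt 2 * (d+1) * d / 4 : ℝ) : ℂ)
        + ((Real.sqrt 2 * (d+1) / 4 : ℝ) : ℂ) * Complex.I := by
      unfold tauc; push_cast; ring
    rw [e, Complex.normSq_add_mul_I]
    linear_combination ((1/16 : ℝ) + (1/8 : ℝ)*d + (1/8 : ℝ)*d^2 + (1/8 : ℝ)*d^3 + (1/16 : ℝ)*d^4) * h2 + ((5/8 : ℝ) + (1/4 : ℝ)*d + (1/8 : ℝ)*d^2) * hd
  have hnom1 : Complex.normSq (om1c d) = 1 := by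
    have e : om1c d = ((Real.sqrt 2 * (d-1) / 4 : ℝ) : ℂ)
        + ((Real.sqrt 2 * (d+1) / 4 : ℝ) : ℂ) * Complex.I := by
      unfold om1c; push_cast; ring
    rw [e, Complex.normSq_add_mul_I]
    linear_combination ((1/8 : ℝ) + (1/8 : ℝ)*d^2) * h2 + ((1/4 : ℝ)) * hd
  have hnv1 : Complex.normSq (v1c d) = 2 - d := by
    have e : v1c d = ((-(d-1)/2 : ℝ) : ℂ) + ((-(d-1)/2 : ℝ) : ℂ) * Complex.I := by
      unfold v1c; push_cast; ring
    rw [e, Complex.normSq_add_mul_I]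
    linear_combination ((1/2 : ℝ)) * hd
  have hnk : Complex.normSq (kc c d) = c ^ 2 * (2 + d) / 2 := by
    have e : kc c d = ((c * (1 + d) / 2 : ℝ) : ℂ) := by unfold kc; push_cast; ring
    rw [e, Complex.normSq_ofReal]
    linear_combination ((1/4 : ℝ)*c^2) * hd
  have hnr : Complex.normSq (lam * rhoc d) = 2 - d := by
    rw [map_mul, hnlam, hnrho, one_mul]
  have hns : Complex.normSq (lam * tauc d) = 2 + d := by
    rw [map_mul, hnlam, hntau, one_mul]
  have hnw1 : Complex.normSq (lam * om1c d) = 1 := by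
    rw [map_mul, hnlam, hnom1, one_mul]
  have hrne : lam * rhoc d ≠ 0 := by
    intro h; rw [h] at hnr; simp at hnr; linarith
  have hsne : lam * tauc d ≠ 0 := by
    intro h; rw [h] at hns; simp at hns; linarith
  have hkne : kc c d ≠ 0 := by
    intro h; rw [h] at hnk; simp at hnk; nlinarith
  -- the six algebraic identities
  have idA : (Real.sqrt 2 : ℂ) * lam * v1c d = lam * rhoc d * (v1c d - 1) := by
    unfold v1c rhoc
    linear_combination ((-1/8 : ℂ)*lam*(Real.sqrt 2:ℂ)*Complex.I + (1/8 : ℂ)*lam*(Real.sqrt 2:ℂ)*Complex.I^2 + (1/8 : ℂ)*lam*(Real.sqrt 2:ℂ)*(d:ℂ) + (1/8 : ℂ)*lam*(Real.sqrt 2:ℂ)*(d:ℂ)*Complex.I) * hD + ((1/2 : ℂ)*lam*(Real.sqrt 2:ℂ) + (-1/4 : ℂ)*lam*(Real.sqrt 2:ℂ)*(d:ℂ)) * Complex.I_sq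
  have idB : (Real.sqrt 2 : ℂ) * lam * (lam * rhoc d) = -(v1c d + 1) := by
    unfold v1c rhoc
    linear_combination ((-1/4 : ℂ)*(Real.sqrt 2:ℂ)^2*Complex.I + (-1/4 : ℂ)*(Real.sqrt 2:ℂ)^2*(d:ℂ) + (1/4 : ℂ)*(Real.sqrt 2:ℂ)^2*(d:ℂ)*Complex.I + (1/4 : ℂ)*(Real.sqrt 2:ℂ)^2*(d:ℂ)^2) * hlam + ((1/8 : ℂ)*Complex.I + (1/8 : ℂ)*(d:ℂ) + (-1/8 : ℂ)*(d:ℂ)*Complex.I + (-1/8 : ℂ)*(d:ℂ)*Complex.I^2 + (-1/8 : ℂ)*(d:ℂ)^2 + (-1/8 : ℂ)*(d:ℂ)^2*Complex.I + (1/8 : ℂ)*(d:ℂ)^2*Complex.I^2 + (1/8 : ℂ)*(d:ℂ)^3*Complex.I) * hq2 + ((-1/4 : ℂ) + (-1/4 : ℂ)*Complex.I + (1/4 : ℂ)*Complex.I^2 + (1/4 : ℂ)*(d:ℂ)*Complex.I) * hD + ((3/4 : ℂ) + (-1/4 : ℂ)*(d:ℂ)) * Complex.I_sq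
  have idC : (Real.sqrt 2 : ℂ) * lam = -Complex.I * (lam * om1c d) - (-(lam * rhoc d)) := by
    unfold om1c rhoc
    linear_combination ((-1/4 : ℂ)*lam*(Real.sqrt 2:ℂ)) * hD + ((1/4 : ℂ)*lam*(Real.sqrt 2:ℂ) + (1/4 : ℂ)*lam*(Real.sqrt 2:ℂ)*(d:ℂ)) * Complex.I_sq
  have idD : (Real.sqrt 2 : ℂ) * lam * (lam * om1c d) = v1c d - 1 := by
    unfold v1c om1c
    linear_combination ((-1/4 : ℂ)*(Real.sqrt 2:ℂ)^2 + (1/4 : ℂ)*(Real.sqrt 2:ℂ)^2*Complex.I + (1/4 : ℂ)*(Real.sqrt 2:ℂ)^2*(d:ℂ) + (1/4 : ℂ)*(Real.sqrt 2:ℂ)^2*(d:ℂ)*Complex.I) * hlam + ((1/8 : ℂ) + (-1/8 : ℂ)*Complex.I + (-1/8 : ℂ)*(d:ℂ) + (-1/4 : ℂ)*(d:ℂ)*Complex.I + (1/8 : ℂ)*(d:ℂ)*Complex.I^2 + (1/8 : ℂ)*(d:ℂ)^2*Complex.I + (1/8 : ℂ)*(d:ℂ)^2*Complex.I^2) * hq2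 + ((1/4 : ℂ)*Complex.I + (1/4 : ℂ)*Complex.I^2) * hD + ((3/4 : ℂ) + (1/4 : ℂ)*(d:ℂ)) * Complex.I_sq
  have idE : (Real.sqrt 2 : ℂ) * lam * (lam * tauc d) * (-(lam * rhoc d))
      = -Complex.I * (lam * om1c d) - (-(lam * rhoc d)) := by
    unfold tauc rhoc om1c
    linear_combination ((1/16 : ℂ)*lam*(Real.sqrt 2:ℂ)^3*Complex.I^2 + (1/8 : ℂ)*lam*(Real.sqrt 2:ℂ)^3*(d:ℂ)*Complex.I + (1/16 : ℂ)*lam*(Real.sqrt 2:ℂ)^3*(d:ℂ)^2 + (-1/16 : ℂ)*lam*(Real.sqrt 2:ℂ)^3*(d:ℂ)^2*Complex.I^2 + (-1/8 : ℂ)*lam*(Real.sqrt 2:ℂ)^3*(d:ℂ)^3*Complex.I + (-1/16 : ℂ)*lam*(Real.sqrt 2:ℂ)^3*(d:ℂ)^4) * hlam + ((-1/32 : ℂ)*lam*(Real.sqrt 2:ℂ)*Complex.I^2 + (-1/16 : ℂ)*lam*(Real.sqrt 2:ℂ)*(d:ℂ)*Complex.I + (1/32 : ℂ)*lam*(Real.sqrt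 2:ℂ)*(d:ℂ)*Complex.I^3 + (-1/32 : ℂ)*lam*(Real.sqrt 2:ℂ)*(d:ℂ)^2 + (3/32 : ℂ)*lam*(Real.sqrt 2:ℂ)*(d:ℂ)^2*Complex.I^2 + (3/32 : ℂ)*lam*(Real.sqrt 2:ℂ)*(d:ℂ)^3*Complex.I + (-1/32 : ℂ)*lam*(Real.sqrt 2:ℂ)*(d:ℂ)^3*Complex.I^3 + (1/32 : ℂ)*lam*(Real.sqrt 2:ℂ)*(d:ℂ)^4 + (-1/16 : ℂ)*lam*(Real.sqrt 2:ℂ)*(d:ℂ)^4*Complex.I^2 + (-1/32 : ℂ)*lam*(Real.sqrt 2:ℂ)*(d:ℂ)^5*Complex.I) * hq2 + ((-1/8 : ℂ)*lam*(Real.sqrt 2:ℂ) + (-3/16 : ℂ)*lam*(Real.sqrt 2:ℂ)*Complex.I^2 + (-1/16 : ℂ)*lam*(Real.sqrt 2:ℂ)*(d:ℂ)*Complex.I^3 + (1/16 : ℂ)*lam*(Real.sqrt 2:ℂ)*(d:ℂ)^2 + (-1/8 : ℂ)*lam*(Real.sqrt 2:ℂ)*(d:ℂ)^2*Complex.I^2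 + (-1/16 : ℂ)*lam*(Real.sqrt 2:ℂ)*(d:ℂ)^3*Complex.I) * hD + ((-3/8 : ℂ)*lam*(Real.sqrt 2:ℂ) + (1/4 : ℂ)*lam*(Real.sqrt 2:ℂ)*(d:ℂ) + (-1/8 : ℂ)*lam*(Real.sqrt 2:ℂ)*(d:ℂ)*Complex.I) * Complex.I_sq
  have idF : (Real.sqrt 2 : ℂ) * lam * (lam * om1c d)
      = lam * tauc d * (lam * om1c d + Complex.I * (-(lam * rhoc d))) := by
    unfold tauc rhoc om1c
    linear_combination ((-1/4 : ℂ)*(Real.sqrt 2:ℂ)^2 + (5/16 : ℂ)*(Real.sqrt 2:ℂ)^2*Complex.I + (-1/16 : ℂ)*(Real.sqrt 2:ℂ)^2*Complex.I^2 + (-1/16 : ℂ)*(Real.sqrt 2:ℂ)^2*Complex.I^3 + (5/16 : ℂ)*(Real.sqrt 2:ℂ)^2*(d:ℂ) + (3/16 : ℂ)*(Real.sqrt 2:ℂ)^2*(d:ℂ)*Complex.I + (-1/4 : ℂ)*(Real.sqrt 2:ℂ)^2*(d:ℂ)*Complex.I^2 + (-1/4 : ℂ)*(Real.sqrt 2:ℂ)^2*(d:ℂ)^2*Complex.I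 + (-1/16 : ℂ)*(Real.sqrt 2:ℂ)^2*(d:ℂ)^2*Complex.I^2 + (1/16 : ℂ)*(Real.sqrt 2:ℂ)^2*(d:ℂ)^2*Complex.I^3 + (-1/16 : ℂ)*(Real.sqrt 2:ℂ)^2*(d:ℂ)^3 + (-1/16 : ℂ)*(Real.sqrt 2:ℂ)^2*(d:ℂ)^3*Complex.I + (1/8 : ℂ)*(Real.sqrt 2:ℂ)^2*(d:ℂ)^3*Complex.I^2 + (1/16 : ℂ)*(Real.sqrt 2:ℂ)^2*(d:ℂ)^4*Complex.I) * hlam + ((1/8 : ℂ) + (-5/32 : ℂ)*Complex.I + (1/32 : ℂ)*Complex.I^2 + (1/32 : ℂ)*Complex.I^3 + (-5/32 : ℂ)*(d:ℂ) + (-7/32 : ℂ)*(d:ℂ)*Complex.I + (9/32 : ℂ)*(d:ℂ)*Complex.I^2 + (-1/32 : ℂ)*(d:ℂ)*Complex.I^3 + (-1/32 : ℂ)*(d:ℂ)*Complex.I^4 + (9/32 : ℂ)*(d:ℂ)^2*Complex.I + (1/8 : ℂ)*(d:ℂ)^2*Complex.I^2 + (-5/32 : ℂ)*(d:ℂ)^2*Complex.I^3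 + (1/32 : ℂ)*(d:ℂ)^3 + (1/32 : ℂ)*(d:ℂ)^3*Complex.I + (-3/16 : ℂ)*(d:ℂ)^3*Complex.I^2 + (-1/32 : ℂ)*(d:ℂ)^3*Complex.I^3 + (1/32 : ℂ)*(d:ℂ)^3*Complex.I^4 + (-1/16 : ℂ)*(d:ℂ)^4*Complex.I + (-1/32 : ℂ)*(d:ℂ)^4*Complex.I^2 + (1/16 : ℂ)*(d:ℂ)^4*Complex.I^3 + (1/32 : ℂ)*(d:ℂ)^5*Complex.I^2) * hq2 + ((3/16 : ℂ)*Complex.I + (1/16 : ℂ)*Complex.I^2 + (1/16 : ℂ)*Complex.I^3 + (1/16 : ℂ)*(d:ℂ) + (1/16 : ℂ)*(d:ℂ)*Complex.I + (-3/16 : ℂ)*(d:ℂ)*Complex.I^2 + (-1/16 : ℂ)*(d:ℂ)*Complex.I^3 + (1/16 : ℂ)*(d:ℂ)*Complex.I^4 + (-1/8 : ℂ)*(d:ℂ)^2*Complex.I + (-1/16 : ℂ)*(d:ℂ)^2*Complex.I^2 + (1/8 : ℂ)*(d:ℂ)^2*Complex.I^3 + (1/16 : ℂ)*(d:ℂ)^3*Complex.I^2)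 * hD + ((1/4 : ℂ) + (1/4 : ℂ)*Complex.I + (-1/8 : ℂ)*(d:ℂ) + (-1/4 : ℂ)*(d:ℂ)*Complex.I + (1/8 : ℂ)*(d:ℂ)*Complex.I^2) * Complex.I_sq
  -- component values
  have hp1 : ∀ x : ℤ, 0 ≤ x → (Psi c d lam x).1 = kc c d * (lam * rhoc d) ^ x * v1c d := by
    intro x hx; simp [Psi, if_pos hx]
  have hp2 : ∀ x : ℤ, 0 ≤ x → (Psi c d lam x).2 = kc c d * (lam * rhoc d) ^ x := by
    intro x hx; simp [Psi, if_pos hx]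
  have hm1 : ∀ x : ℤ, x < 0 →
      (Psi c d lam x).1 = kc c d * (lam * tauc d) ^ (x + 1) * (lam * om1c d) := by
    intro x hx; simp [Psi, if_neg (by omega : ¬ (0:ℤ) ≤ x)]
  have hm2 : ∀ x : ℤ, x < 0 →
      (Psi c d lam x).2 = kc c d * (lam * tauc d) ^ (x + 1) * (-(lam * rhoc d)) := by
    intro x hx; simp [Psi, if_neg (by omega : ¬ (0:ℤ) ≤ x)]
  -- phase values
  have hph1 : ∀ y : ℤ, 0 ≤ y → qwPhase Real.pi (Real.pi/2) y = Real.pi := by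
    intro y hy; unfold qwPhase; exact if_pos hy
  have hph2 : ∀ y : ℤ, y < 0 → qwPhase Real.pi (Real.pi/2) y = Real.pi/2 := by
    intro y hy; unfold qwPhase; exact if_neg (by omega)
  -- exponentials
  have he1 : Complex.exp (Complex.I * (Real.pi : ℂ)) = -1 := by
    rw [mul_comm]; exact Complex.exp_pi_mul_I
  have he2 : Complex.exp (-Complex.I * (Real.pi : ℂ)) = -1 := by
    rw [neg_mul, mul_comm, Complex.exp_neg, Complex.exp_pi_mul_I]; norm_num
  have he3 : Complex.exp (Complex.I * ((Real.pi/2 : ℝ) : ℂ)) = Complex.I := by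
    rw [mul_comm, Complex.exp_mul_I, ← Complex.ofReal_cos, ← Complex.ofReal_sin,
      Real.cos_pi_div_two, Real.sin_pi_div_two]
    simp
  have he4 : Complex.exp (-Complex.I * ((Real.pi/2 : ℝ) : ℂ)) = -Complex.I := by
    rw [neg_mul, Complex.exp_neg, mul_comm, Complex.exp_mul_I, ← Complex.ofReal_cos,
      ← Complex.ofReal_sin, Real.cos_pi_div_two, Real.sin_pi_div_two]
    simp
  have heig : ∀ x : ℤ, lam • Psi c d lam x = qwStep Real.pi (Real.pi / 2) (Psi c d lam) x := by
    intro x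
    refine Prod.ext_iff.mpr ⟨?_, ?_⟩
    · -- first component
      simp only [qwStep, Prod.smul_fst, smul_eq_mul]
      rcases (show 0 ≤ x ∨ x = -1 ∨ x ≤ -2 by omega) with hx | hx | hx
      · rw [hph1 (x+1) (by omega), he1, hp1 x hx, hp1 (x+1) (by omega),
          hp2 (x+1) (by omega), zpow_add_one₀ hrne, ← add_div, eq_div_iff hq2ne]
        linear_combination (kc c d * (lam * rhoc d) ^ x) * idA
      · subst hx
        have e0 : (-1 : ℤ) + 1 = 0 := by norm_num
        rw [hph1 (-1+1) (by norm_num), he1, hp1 (-1+1) (by norm_num),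
          hp2 (-1+1) (by norm_num), hm1 (-1) (by norm_num), e0]
        simp only [zpow_zero, mul_one]
        rw [← add_div, eq_div_iff hq2ne]
        linear_combination (kc c d) * idD
      · rw [hph2 (x+1) (by omega), he3, hm1 x (by omega), hm1 (x+1) (by omega),
          hm2 (x+1) (by omega), zpow_add_one₀ hsne (x+1), ← add_div,
          eq_div_iff hq2ne]
        linear_combination (kc c d * (lam * tauc d) ^ (x+1)) * idF
    · -- second component
      simp only [qwStep, Prod.smul_snd, smul_eq_mul]
      rcases (show 1 ≤ x ∨ x = 0 ∨ x ≤ -1 by omega) with hx | hx | hx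
      · have ex : (lam * rhoc d) ^ x = (lam * rhoc d) ^ (x-1) * (lam * rhoc d) := by
          rw [← zpow_add_one₀ hrne]; congr 1; omega
        rw [hph1 (x-1) (by omega), he2, hp2 x (by omega), hp1 (x-1) (by omega),
          hp2 (x-1) (by omega), ex, div_sub_div_same, eq_div_iff hq2ne]
        linear_combination (kc c d * (lam * rhoc d) ^ (x-1)) * idB
      · subst hx
        have e0 : (0 : ℤ) - 1 = -1 := by norm_num
        have e1 : (-1 : ℤ) + 1 = 0 := by norm_num
        rw [hph2 (0-1) (by norm_num), he4, hp2 0 le_rfl, hm1 (0-1) (by norm_num),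
          hm2 (0-1) (by norm_num), e0, e1]
        simp only [zpow_zero, mul_one]
        rw [div_sub_div_same, eq_div_iff hq2ne]
        linear_combination (kc c d) * idC
      · have ex : (x : ℤ) - 1 + 1 = x := by ring
        rw [hph2 (x-1) (by omega), he4, hm2 x (by omega), hm1 (x-1) (by omega),
          hm2 (x-1) (by omega), ex, zpow_add_one₀ hsne x, div_sub_div_same,
          eq_div_iff hq2ne]
        linear_combination (kc c d * (lam * tauc d) ^ x) * idE
  have hinv : (1 : ℝ) / (2 + d) = 2 - d := by
    rw [div_eq_iff h2d]
    linear_combination hd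
  have hmeas : ∀ x : ℤ, statMeasure (Psi c d lam) x =
      if 0 ≤ x then c ^ 2 / 2 * (3 + d) * (1 / (2 + d)) ^ x.natAbs
      else c ^ 2 / 2 * (3 + d) * (1 / (2 + d)) ^ (x.natAbs - 1) := by
    intro x
    by_cases hx : 0 ≤ x
    · rw [if_pos hx]
      obtain ⟨n, rfl⟩ := Int.eq_ofNat_of_zero_le hx
      simp only [statMeasure]
      rw [hp1 _ hx, hp2 _ hx]
      simp only [map_mul]
      rw [map_zpow₀, hnr, hnk, hnv1, zpow_natCast, Int.natAbs_natCast, hinv]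
      linear_combination (-(c^2/2) * (2-d)^n) * hd
    · rw [if_neg hx]
      simp only [statMeasure]
      rw [hm1 x (by omega), hm2 x (by omega)]
      simp only [map_mul]
      rw [map_zpow₀, hns, hnk, hnlam, hnom1, Complex.normSq_neg, hnr]
      set n : ℕ := x.natAbs - 1 with hn
      have hxn : x + 1 = -(n : ℤ) := by omega
      have hinv2 : ((2 + d : ℝ))⁻¹ = 2 - d := by
        refine inv_eq_of_mul_eq_one_right ?_
        linear_combination -hd
      rw [hxn, zpow_neg, zpow_natCast, ← inv_pow, hinv2, hinv]
      linear_combination (-(c^2/2) * (2-d)^n) * hd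
  refine ⟨Psi c d lam, ?_, heig, hmeas⟩
  intro h
  have h0 : (Psi c d lam 0).2 = 0 := by rw [h]; simp
  rw [hp2 0 le_rfl, zpow_zero, mul_one] at h0
  exact hkne h0

end Stmt11Aux

theorem stmt_11 (c : ℝ) (hc : 0 < c) :
    (∀ lam : ℂ, lam ^ 2 = -(1/2) + (Real.sqrt 3 / 2 : ℝ) * Complex.I →
      ∃ Ψ : ℤ → ℂ × ℂ, Ψ ≠ 0 ∧
        (∀ x : ℤ, lam • Ψ x = qwStep Real.pi (Real.pi / 2) Ψ x) ∧
        (∀ x : ℤ, statMeasure Ψ x =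
          if 0 ≤ x then c ^ 2 / 2 * (3 + Real.sqrt 3) * (1 / (2 + Real.sqrt 3)) ^ x.natAbs
          else c ^ 2 / 2 * (3 + Real.sqrt 3) * (1 / (2 + Real.sqrt 3)) ^ (x.natAbs - 1))) ∧
    (∀ lam : ℂ, lam ^ 2 = -(1/2) - (Real.sqrt 3 / 2 : ℝ) * Complex.I →
      ∃ Ψ : ℤ → ℂ × ℂ, Ψ ≠ 0 ∧
        (∀ x : ℤ, lam • Ψ x = qwStep Real.pi (Real.pi / 2) Ψ x) ∧
        (∀ x : ℤ, statMeasure Ψ x =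
          if 0 ≤ x then c ^ 2 / 2 * (3 - Real.sqrt 3) * (1 / (2 - Real.sqrt 3)) ^ x.natAbs
          else c ^ 2 / 2 * (3 - Real.sqrt 3) * (1 / (2 - Real.sqrt 3)) ^ (x.natAbs - 1))) ∧
    (∀ lam : ℂ, (lam ^ 2 = -(1/2) + (Real.sqrt 3 / 2 : ℝ) * Complex.I
        ∨ lam ^ 2 = -(1/2) - (Real.sqrt 3 / 2 : ℝ) * Complex.I) →
      lam ≠ Complex.I ∧ lam ≠ -Complex.I) := by
  have hs3 : Real.sqrt 3 ^ 2 = 3 := Real.sq_sqrt (by norm_num)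
  have hs3pos : 0 < Real.sqrt 3 := Real.sqrt_pos.mpr (by norm_num)
  refine ⟨?_, ?_, ?_⟩
  · intro lam hl
    exact Stmt11Aux.core c (Real.sqrt 3) hc hs3 lam hl
  · intro lam hl
    obtain ⟨Ψ, h1, h2, h3⟩ := Stmt11Aux.core c (-Real.sqrt 3) hc (by rw [neg_sq]; exact hs3)
      lam (by rw [hl]; push_cast; ring)
    refine ⟨Ψ, h1, h2, ?_⟩
    intro x
    rw [h3 x]
    have e1 : (3 : ℝ) + -Real.sqrt 3 = 3 - Real.sqrt 3 := by ring
    have e2 : (2 : ℝ) + -Real.sqrt 3 = 2 - Real.sqrt 3 := by ring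
    rw [e1, e2]
  · intro lam h
    constructor
    · rintro rfl
      rw [Complex.I_sq] at h
      rcases h with h | h <;>
      · have him := congrArg Complex.im h
        simp at him
        try linarith
    · rintro rfl
      rw [neg_pow, Complex.I_sq] at h
      norm_num at h
      rcases h with h | h <;>
      · have him := congrArg Complex.im h
        simp at him
        try linarith

end
end

section
/- (Symmetry-preserving perturbative coin.) Let σ' ∈ ℝ, n ∈ ℤ, θ, ω ∈ ℝ, and set σ_p = σ' + nπ. Define the 2×2 complex matrices V = diag(e^{iσ'/2}, e^{−iσ'/2}), τ₁ = [[0,1],[1,0]], τ₃ = diag(1,−1), Γ = V·τ₁·V^{−1} = [[0, e^{iσ'}],[e^{−iσ'}, 0]], and the perturbative coin U_p = [[e^{iω}cos θ, e^{iσ_p}sin θ],[e^{−iσ_p}sin θ, −e^{−iω}cos θ]]. Then U_p·τ₃ is invertible and Γ·(U_p·τ₃)·Γ^{−1} = (U_p·τ₃)^{−1}; i.e., the coin U_p satisfies the condition demanded by chiral symmetry of the complete two-phase QW. -/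
noncomputable section
open Complex Matrix

theorem stmt_13
    (σ' : ℝ) (n : ℤ) (θ ω : ℝ) (σp : ℝ) (hσp : σp = σ' + n * Real.pi)
    (Γ Up τ3 : Matrix (Fin 2) (Fin 2) ℂ)
    (hΓ : Γ = !![0, Complex.exp (Complex.I * (σ' : ℂ));
                 Complex.exp (-Complex.I * (σ' : ℂ)), 0])
    (hτ3 : τ3 = !![1, 0; 0, -1])
    (hUp : Up = !![Complex.exp (Complex.I * (ω : ℂ)) * (Real.cos θ : ℂ),
                   Complex.exp (Complex.I * (σp : ℂ)) * (Real.sin θ : ℂ);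
                   Complex.exp (-Complex.I * (σp : ℂ)) * (Real.sin θ : ℂ),
                   -Complex.exp (-Complex.I * (ω : ℂ)) * (Real.cos θ : ℂ)]) :
    IsUnit (Up * τ3) ∧ Γ * (Up * τ3) * Γ⁻¹ = (Up * τ3)⁻¹ := by
  have r1 : Complex.exp (Complex.I * σ') * Complex.exp (-Complex.I * σ') = 1 := by
    rw [← Complex.exp_add]; ring_nf; exact Complex.exp_zero
  have r2 : Complex.exp (Complex.I * σp) * Complex.exp (-Complex.I * σp) = 1 := by
    rw [← Complex.exp_add]; ring_nf; exact Complex.exp_zero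
  have r3 : Complex.exp (Complex.I * ω) * Complex.exp (-Complex.I * ω) = 1 := by
    rw [← Complex.exp_add]; ring_nf; exact Complex.exp_zero
  have r4 : (Real.cos θ : ℂ)^2 + (Real.sin θ : ℂ)^2 = 1 := by
    norm_cast; exact Real.cos_sq_add_sin_sq θ
  have key2 : Complex.exp (-Complex.I * σ') ^ 2 * Complex.exp (Complex.I * σp) ^ 2 = 1 := by
    rw [← Complex.exp_nat_mul, ← Complex.exp_nat_mul, ← Complex.exp_add,
      show (2:ℕ) * (-Complex.I * σ') + (2:ℕ) * (Complex.I * σp)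
        = (n : ℤ) * (2 * Real.pi * Complex.I) by push_cast [hσp]; ring]
    exact Complex.exp_int_mul_two_pi_mul_I n
  have key3 : Complex.exp (Complex.I * σ') ^ 2 * Complex.exp (-Complex.I * σp) ^ 2 = 1 := by
    rw [← Complex.exp_nat_mul, ← Complex.exp_nat_mul, ← Complex.exp_add,
      show (2:ℕ) * (Complex.I * σ') + (2:ℕ) * (-Complex.I * σp)
        = (-n : ℤ) * (2 * Real.pi * Complex.I) by push_cast [hσp]; ring]
    exact Complex.exp_int_mul_two_pi_mul_I (-n)
  have key : Complex.exp (Complex.I * σ') * Complex.exp (Complex.I * σ') *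
      Complex.exp (-Complex.I * σp) = Complex.exp (Complex.I * σp) := by
    rw [← Complex.exp_add, ← Complex.exp_add,
      show Complex.I * σ' + Complex.I * σ' + -Complex.I * σp
        = Complex.I * σp + (-n : ℤ) * (2 * Real.pi * Complex.I) by
        push_cast [hσp]; ring,
      Complex.exp_add, Complex.exp_int_mul_two_pi_mul_I, mul_one]
  set a := Complex.exp (Complex.I * (σ' : ℂ)) with ha
  set a' := Complex.exp (-Complex.I * (σ' : ℂ)) with ha'
  set b := Complex.exp (Complex.I * (σp : ℂ)) with hb
  set b' := Complex.exp (-Complex.I * (σp : ℂ)) with hb'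
  set w := Complex.exp (Complex.I * (ω : ℂ)) with hw
  set w' := Complex.exp (-Complex.I * (ω : ℂ)) with hw'
  set c := (Real.cos θ : ℂ) with hc
  set s := (Real.sin θ : ℂ) with hs
  subst hΓ hτ3 hUp
  have hAB : (!![w * c, b * s; b' * s, -w' * c] * !![1,0;0,-1]) *
      (!![(0:ℂ), a; a', 0] * (!![w * c, b * s; b' * s, -w' * c] * !![1,0;0,-1]) *
        !![(0:ℂ), a; a', 0]) = 1 := by
    ext i j
    fin_cases i <;> fin_cases j <;>
      simp [Matrix.mul_apply, Fin.sum_univ_two, Matrix.one_apply]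
    · linear_combination (c^2*a*a')*r3 + c^2*r1 + s^2*key2 + r4
    · linear_combination w*c*s*key - w*c*s*b*r1
    · linear_combination w'*c*s*b'*r1 - w'*c*s*b'*key2 + w'*c*s*a'^2*b*r2
    · linear_combination s^2*key3 + c^2*a*a'*r3 + c^2*r1 + r4
  have hGG : (!![(0:ℂ), a; a', 0] : Matrix (Fin 2) (Fin 2) ℂ) * !![(0:ℂ), a; a', 0] = 1 := by
    ext i j
    fin_cases i <;> fin_cases j <;>
      simp [Matrix.mul_apply, Fin.sum_univ_two, Matrix.one_apply] <;>
      linear_combination r1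
  refine ⟨(Matrix.isUnit_iff_isUnit_det _).2 (Matrix.isUnit_det_of_right_inverse hAB), ?_⟩
  rw [Matrix.inv_eq_right_inv hGG, Matrix.inv_eq_right_inv hAB]
end
end

section
/- (Chiral symmetry of the homogeneous walk in the symmetry time frame.) Let σ₀, θ ∈ ℝ. On the space W of functions ψ : ℤ → ℂ² (components written ψ(x) = (ψ^L(x), ψ^R(x))), define the linear maps: (S₊ψ)(x) = (ψ^L(x), ψ^R(x−1)), (S₋ψ)(x) = (ψ^L(x+1), ψ^R(x)), and for a 2×2 complex matrix M the pointwise map (M̂ψ)(x) = M·ψ(x). Set R = [[cos(θ/2), −e^{iσ₀}sin(θ/2)],[e^{−iσ₀}sin(θ/2), cos(θ/2)]], E = diag(e^{−iπ/4}, e^{iπ/4}), G = [[0, e^{iσ₀}],[e^{−iσ₀}, 0]], and A = R̂ ∘ Ê ∘ S₋ ∘ S₊ ∘ Ê ∘ R̂ : W → W. Then Ĝ ∘ A ∘ Ĝ ∘ A = id_W. (Since Ĝ² = id, this says Ĝ A Ĝ^{−1} = A^{−1}, i.e., the time-evolution operator U' = i·A in the symmetry time frame satisfies the chiral symmetry relation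 Γ e^{iε_Γ} U' Γ^{−1} = (e^{iε_Γ} U')^{−1} with ε_Γ = −π/2 and Γ = Ĝ.) -/
noncomputable section
open Complex Matrix

/-- The split-shift operator `S₊`: `(S₊ψ)(x) = (ψ^L(x), ψ^R(x−1))`. -/
def Splus (ψ : ℤ → ℂ × ℂ) (x : ℤ) : ℂ × ℂ := ((ψ x).1, (ψ (x - 1)).2)

/-- The split-shift operator `S₋`: `(S₋ψ)(x) = (ψ^L(x+1), ψ^R(x))`. -/
def Sminus (ψ : ℤ → ℂ × ℂ) (x : ℤ) : ℂ × ℂ := ((ψ (x + 1)).1, (ψ x).2)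

/-- Pointwise action of a 2×2 matrix on the coin space. -/
def matAct (M : Matrix (Fin 2) (Fin 2) ℂ) (ψ : ℤ → ℂ × ℂ) (x : ℤ) : ℂ × ℂ :=
  (M 0 0 * (ψ x).1 + M 0 1 * (ψ x).2, M 1 0 * (ψ x).1 + M 1 1 * (ψ x).2)

set_option maxHeartbeats 4000000 in
set_option maxRecDepth 40000 in
theorem stmt_16
    (σ0 θ : ℝ)
    (R E G : Matrix (Fin 2) (Fin 2) ℂ)
    (hR : R = !![(Real.cos (θ / 2) : ℂ),
          -Complex.exp (Complex.I * (σ0 : ℂ)) * (Real.sin (θ / 2) : ℂ);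
          Complex.exp (-Complex.I * (σ0 : ℂ)) * (Real.sin (θ / 2) : ℂ),
          (Real.cos (θ / 2) : ℂ)])
    (hE : E = !![Complex.exp (-Complex.I * ((Real.pi / 4 : ℝ) : ℂ)), 0;
          0, Complex.exp (Complex.I * ((Real.pi / 4 : ℝ) : ℂ))])
    (hG : G = !![0, Complex.exp (Complex.I * (σ0 : ℂ));
          Complex.exp (-Complex.I * (σ0 : ℂ)), 0])
    (A : (ℤ → ℂ × ℂ) → (ℤ → ℂ × ℂ))
    (hA : A = fun ψ => matAct R (matAct E (Sminus (Splus (matAct E (matAct R ψ)))))) :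
    ∀ ψ : ℤ → ℂ × ℂ, matAct G (A (matAct G (A ψ))) = ψ := by
  subst hA hR hE hG
  intro ψ
  funext x
  have hef : Complex.exp (Complex.I * ((Real.pi / 4 : ℝ) : ℂ)) *
      Complex.exp (-Complex.I * ((Real.pi / 4 : ℝ) : ℂ)) = 1 := by
    rw [← Complex.exp_add]
    norm_num
  have hab : Complex.exp (Complex.I * (σ0 : ℂ)) *
      Complex.exp (-Complex.I * (σ0 : ℂ)) = 1 := by
    rw [← Complex.exp_add]
    norm_num
  have hcs : ((Real.sin (θ / 2) : ℂ)) ^ 2 + ((Real.cos (θ / 2) : ℂ)) ^ 2 = 1 := by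
    norm_cast
    exact_mod_cast Real.sin_sq_add_cos_sq (θ / 2)
  simp only [matAct, Splus, Sminus, Fin.isValue, Matrix.of_apply, Matrix.cons_val',
    Matrix.cons_val_zero, Matrix.empty_val', Matrix.cons_val_fin_one, Matrix.cons_val_one,
    Matrix.head_fin_const, Matrix.head_cons, add_sub_cancel_right, sub_add_cancel]
  set c : ℂ := ((Real.cos (θ / 2) : ℝ) : ℂ) with hc
  set s : ℂ := ((Real.sin (θ / 2) : ℝ) : ℂ) with hs
  set a : ℂ := Complex.exp (Complex.I * (σ0 : ℂ)) with ha
  set b : ℂ := Complex.exp (-Complex.I * (σ0 : ℂ)) with hb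
  set e : ℂ := Complex.exp (Complex.I * ((Real.pi / 4 : ℝ) : ℂ)) with he
  set f : ℂ := Complex.exp (-Complex.I * ((Real.pi / 4 : ℝ) : ℂ)) with hf
  rw [← Prod.mk.eta (p := ψ x), Prod.mk.injEq]
  constructor
  · linear_combination
      ((e * f + 1) * a * b * (a * b * s ^ 2 + c ^ 2) ^ 2 * (ψ x).1) * hef +
      ((a ^ 2 * b ^ 2 * s ^ 4 + a * b * s ^ 4 + 2 * a * b * s ^ 2 * c ^ 2 + s ^ 4 +
        2 * s ^ 2 * c ^ 2 + c ^ 4) * (ψ x).1) * hab +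
      ((s ^ 2 + c ^ 2 + 1) * (ψ x).1) * hcs
  · linear_combination
      ((e * f + 1) * a * b * (a * b * s ^ 2 + c ^ 2) ^ 2 * (ψ x).2) * hef +
      ((a ^ 2 * b ^ 2 * s ^ 4 + a * b * s ^ 4 + 2 * a * b * s ^ 2 * c ^ 2 + s ^ 4 +
        2 * s ^ 2 * c ^ 2 + c ^ 4) * (ψ x).2) * hab +
      ((s ^ 2 + c ^ 2 + 1) * (ψ x).2) * hcs
end
end

section
/- (Winding number ν′ of the homogeneous walk.) For θ ∈ ℝ with 0 < θ < π or −π < θ < 0, define g : ℝ → ℂ by g(k) = (cos k·sin θ + i·sin k)/√(1 − cos²k·cos²θ) (the denominator is strictly positive for all k). Then g takes values in the unit circle and the winding number (1/(2πi))·∫_{−π}^{π} conj(g(k))·g′(k) dk equals +1 if 0 < θ < π and −1 if −π < θ < 0. -/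
noncomputable section
open Complex


private lemma auxAlg (d e s c : ℝ) (he : e^2 = 1 - d^2) (hc : c^2 = 1 - s^2)
    (hw : 1 - d^2*(1-s) ≠ 0) (hp : 1 - d^2*c^2 ≠ 0) :
    1 + (((d*d - e*e)*(1-s) * (1 - d^2*(1-s)) - (e*d*(1-s)) * (2*e*d*(1-s))) / (1 - d^2*(1-s))^2)
      / (1 + (e*d*(1-s) / (1 - d^2*(1-s)))^2) = s / (1 - d^2*c^2) := by
  have hwv : (1 - d^2*(1-s))^2 + (e*d*(1-s))^2 = 1 - d^2*c^2 := by
    linear_combination (d^2*(1-s)^2) * he + d^2 * hc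
  have hnum : (d*d - e*e)*(1-s) * (1 - d^2*(1-s)) - (e*d*(1-s)) * (2*e*d*(1-s))
      = s - (1 - d^2*c^2) := by
    linear_combination (-(1-s)*(1 - d^2*(1-s)) - 2*d^2*(1-s)^2) * he + (-d^2) * hc
  have h1 : 1 + (e*d*(1-s) / (1 - d^2*(1-s)))^2 = (1 - d^2*c^2) / (1 - d^2*(1-s))^2 := by
    field_simp
    linear_combination hwv
  rw [hnum, h1]
  rw [div_div_div_eq]
  field_simp
  ring

private lemma keyIntegral (c : ℝ) (hc : c^2 < 1) :
    ∫ k in (-Real.pi)..Real.pi, Real.sqrt (1 - c^2) / (1 - Real.cos k ^ 2 * c^2)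
      = 2 * Real.pi := by
  set s := Real.sqrt (1 - c^2) with hsdef
  have h1c : 0 < 1 - c^2 := by linarith
  have hs2 : s^2 = 1 - c^2 := Real.sq_sqrt h1c.le
  have hs0 : 0 < s := Real.sqrt_pos.mpr h1c
  have hs1 : s ≤ 1 := by nlinarith [hs2, sq_nonneg c]
  have hw : ∀ k : ℝ, 0 < 1 - Real.cos k ^2 * (1-s) := by
    intro k; nlinarith [Real.cos_sq_le_one k, Real.neg_one_le_cos k]
  have hp : ∀ k : ℝ, 0 < 1 - Real.cos k ^2 * c^2 := by
    intro k; nlinarith [Real.cos_sq_le_one k, sq_nonneg c, sq_nonneg (Real.cos k * c)]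
  set F : ℝ → ℝ := fun k => k +
    Real.arctan (Real.sin k * Real.cos k * (1-s) / (1 - Real.cos k^2*(1-s))) with hF
  have hder : ∀ x : ℝ, HasDerivAt F (s / (1 - Real.cos x ^2 * c^2)) x := by
    intro x
    have hv : HasDerivAt (fun k => Real.sin k * Real.cos k * (1-s))
        ((Real.cos x * Real.cos x - Real.sin x * Real.sin x)*(1-s)) x := by
      have := ((Real.hasDerivAt_sin x).mul (Real.hasDerivAt_cos x)).mul_const (1-s)
      exact this.congr_deriv (by ring)
    have hw' : HasDerivAt (fun k => 1 - Real.cos k^2*(1-s))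
        (2*Real.sin x*Real.cos x*(1-s)) x := by
      have := (((Real.hasDerivAt_cos x).pow 2).mul_const (1-s)).const_sub 1
      exact this.congr_deriv (by ring)
    have hu := hv.div hw' (ne_of_gt (hw x))
    have h2 := (hasDerivAt_id x).add hu.arctan
    refine h2.congr_deriv ?_
    simp only [Pi.div_apply]
    have := auxAlg (Real.cos x) (Real.sin x) s c (Real.sin_sq x) (by linarith [hs2])
      (ne_of_gt (hw x)) (ne_of_gt (hp x))
    rw [← this]
    ring
  have hcont : Continuous fun k : ℝ => s / (1 - Real.cos k ^2 * c^2) :=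
    continuous_const.div (by continuity) (fun k => ne_of_gt (hp k))
  rw [intervalIntegral.integral_eq_sub_of_hasDerivAt (fun x _ => hder x)
    (hcont.intervalIntegrable _ _)]
  simp [hF, Real.sin_pi]
  ring

private lemma auxC (sθ cθ sk ck d : ℝ) (hd0 : d ≠ 0)
    (hd2 : d^2 = 1 - ck^2*cθ^2) (hk : sk^2 + ck^2 = 1) (hθ : sθ^2 + cθ^2 = 1) :
    (starRingEnd ℂ) ((((ck*sθ : ℝ) : ℂ) + Complex.I * ((sk : ℝ) : ℂ)) / ((d : ℝ) : ℂ)) *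
      (((((-sk*sθ : ℝ) : ℂ) + Complex.I * ((ck : ℝ) : ℂ)) * ((d : ℝ) : ℂ)
        - ((((ck*sθ : ℝ) : ℂ)) + Complex.I * ((sk : ℝ) : ℂ)) * (((2*sk*ck*cθ^2/(2*d) : ℝ)) : ℂ))
        / (((d : ℝ) : ℂ))^2)
      = Complex.I * ((sθ / (1 - ck^2*cθ^2) : ℝ) : ℂ) := by
  have hdC : ((d : ℝ) : ℂ) ≠ 0 := Complex.ofReal_ne_zero.mpr hd0
  have hd2C : ((d : ℝ) : ℂ)^2 = 1 - (ck:ℂ)^2*(cθ:ℂ)^2 := by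
    exact_mod_cast congrArg (Complex.ofReal) hd2
  have hkC : ((sk : ℝ) : ℂ)^2 + (ck:ℂ)^2 = 1 := by
    exact_mod_cast congrArg (Complex.ofReal) hk
  have hθC : ((sθ : ℝ) : ℂ)^2 + (cθ:ℂ)^2 = 1 := by
    exact_mod_cast congrArg (Complex.ofReal) hθ
  have hp0C : (1 : ℂ) - (ck:ℂ)^2*(cθ:ℂ)^2 ≠ 0 := by rw [← hd2C]; exact pow_ne_zero 2 hdC
  simp only [map_div₀, map_add, map_mul, Complex.conj_I, Complex.conj_ofReal]
  push_cast
  field_simp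
  linear_combination
      ((1 - (ck:ℂ)^2*(cθ:ℂ)^2) * ((ck:ℂ)*(sθ:ℂ) - Complex.I*(sk:ℂ)) * ((ck:ℂ)*Complex.I - (sθ:ℂ)*(sk:ℂ))
        - (sθ:ℂ)*Complex.I*((d:ℂ)^2 + (1 - (ck:ℂ)^2*(cθ:ℂ)^2))) * hd2C
    + (1 - (ck:ℂ)^2*(cθ:ℂ)^2) * (-((ck:ℂ)*(sθ:ℂ) - Complex.I*(sk:ℂ))*Complex.I*(ck:ℂ)*(cθ:ℂ)^2
        + (sθ:ℂ)*Complex.I) * hkC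
    + (1 - (ck:ℂ)^2*(cθ:ℂ)^2) * (-((ck:ℂ)*(sθ:ℂ) - Complex.I*(sk:ℂ))*Complex.I*(ck:ℂ)
        + (sθ:ℂ)*Complex.I*(ck:ℂ)^2) * hθC
    + (1 - (ck:ℂ)^2*(cθ:ℂ)^2) * (-((ck:ℂ)*(sθ:ℂ) - Complex.I*(sk:ℂ))*(sθ:ℂ)*(sk:ℂ)
        - (sθ:ℂ)*Complex.I*(sk:ℂ)^2) * Complex.I_sq


theorem stmt_18
    (θ : ℝ) (hθ : (0 < θ ∧ θ < Real.pi) ∨ (-Real.pi < θ ∧ θ < 0))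
    (g : ℝ → ℂ)
    (hg : g = fun k => (((Real.cos k * Real.sin θ : ℝ) : ℂ)
        + Complex.I * ((Real.sin k : ℝ) : ℂ))
        / ((Real.sqrt (1 - Real.cos k ^ 2 * Real.cos θ ^ 2) : ℝ) : ℂ)) :
    (∀ k : ℝ, ‖g k‖ = 1) ∧
    (1 / (2 * (Real.pi : ℂ) * Complex.I)) *
        ∫ k in (-Real.pi)..Real.pi, (starRingEnd ℂ) (g k) * deriv g k
      = if 0 < θ then 1 else -1 := by
  have hsc := Real.sin_sq_add_cos_sq θ
  have hsin0 : Real.sin θ ≠ 0 := by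
    rcases hθ with ⟨h1, h2⟩ | ⟨h1, h2⟩
    · exact ne_of_gt (Real.sin_pos_of_pos_of_lt_pi h1 h2)
    · exact ne_of_lt (Real.sin_neg_of_neg_of_neg_pi_lt h2 h1)
  have hs2pos : 0 < Real.sin θ ^ 2 :=
    lt_of_le_of_ne (sq_nonneg _) (Ne.symm (pow_ne_zero 2 hsin0))
  have hc : Real.cos θ ^ 2 < 1 := by nlinarith
  have hp : ∀ k : ℝ, 0 < 1 - Real.cos k ^ 2 * Real.cos θ ^ 2 := by
    intro k
    nlinarith [Real.cos_sq_le_one k, sq_nonneg (Real.cos θ), sq_nonneg (Real.cos k * Real.cos θ)]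
  have hd : ∀ k : ℝ, 0 < Real.sqrt (1 - Real.cos k ^ 2 * Real.cos θ ^ 2) :=
    fun k => Real.sqrt_pos.mpr (hp k)
  have habs : ∀ k : ℝ, ‖g k‖ = 1 := by
    intro k
    rw [hg]
    simp only
    rw [norm_div, Complex.norm_real, Real.norm_eq_abs, mul_comm Complex.I, Complex.norm_add_mul_I,
      abs_of_pos (hd k),
      show (Real.cos k * Real.sin θ) ^ 2 + (Real.sin k) ^ 2
          = 1 - Real.cos k ^ 2 * Real.cos θ ^ 2 from by nlinarith [Real.sin_sq_add_cos_sq k]]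
    exact div_self (ne_of_gt (hd k))
  refine ⟨habs, ?_⟩
  have hderiv : ∀ x : ℝ, HasDerivAt g
      (((((-Real.sin x * Real.sin θ : ℝ) : ℂ) + Complex.I * ((Real.cos x : ℝ) : ℂ))
          * ((Real.sqrt (1 - Real.cos x ^ 2 * Real.cos θ ^ 2) : ℝ) : ℂ)
        - ((((Real.cos x * Real.sin θ : ℝ) : ℂ)) + Complex.I * ((Real.sin x : ℝ) : ℂ))
          * (((2 * Real.sin x * Real.cos x * Real.cos θ ^ 2
              / (2 * Real.sqrt (1 - Real.cos x ^ 2 * Real.cos θ ^ 2)) : ℝ)) : ℂ))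
        / (((Real.sqrt (1 - Real.cos x ^ 2 * Real.cos θ ^ 2) : ℝ) : ℂ)) ^ 2) x := by
    intro x
    have hN : HasDerivAt (fun k : ℝ => ((Real.cos k * Real.sin θ : ℝ) : ℂ)
          + Complex.I * ((Real.sin k : ℝ) : ℂ))
        (((-Real.sin x * Real.sin θ : ℝ) : ℂ) + Complex.I * ((Real.cos x : ℝ) : ℂ)) x := by
      have h1 : HasDerivAt (fun k : ℝ => Real.cos k * Real.sin θ) (-Real.sin x * Real.sin θ) x :=
        (Real.hasDerivAt_cos x).mul_const _
      exact h1.ofReal_comp.add ((Real.hasDerivAt_sin x).ofReal_comp.const_mul Complex.I)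
    have hq : HasDerivAt (fun k : ℝ => 1 - Real.cos k ^ 2 * Real.cos θ ^ 2)
        (2 * Real.sin x * Real.cos x * Real.cos θ ^ 2) x := by
      have := (((Real.hasDerivAt_cos x).pow 2).mul_const (Real.cos θ ^ 2)).const_sub 1
      exact this.congr_deriv (by ring)
    have hsq := (hq.sqrt (ne_of_gt (hp x))).ofReal_comp
    have hdiv := hN.div hsq (Complex.ofReal_ne_zero.mpr (ne_of_gt (hd x)))
    rw [hg]
    exact hdiv
  have hkey : ∀ k : ℝ, (starRingEnd ℂ) (g k) * deriv g k
      = Complex.I * ((Real.sin θ / (1 - Real.cos k ^ 2 * Real.cos θ ^ 2) : ℝ) : ℂ) := by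
    intro k
    rw [(hderiv k).deriv, hg]
    exact auxC (Real.sin θ) (Real.cos θ) (Real.sin k) (Real.cos k) _
      (ne_of_gt (hd k)) (Real.sq_sqrt (hp k).le)
      (Real.sin_sq_add_cos_sq k) (Real.sin_sq_add_cos_sq θ)
  have h5 : (∫ k in (-Real.pi)..Real.pi, (starRingEnd ℂ) (g k) * deriv g k)
      = Complex.I * (((∫ k in (-Real.pi)..Real.pi,
          Real.sin θ / (1 - Real.cos k ^ 2 * Real.cos θ ^ 2)) : ℝ) : ℂ) := by
    rw [intervalIntegral.integral_congr (fun k _ => hkey k),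
      intervalIntegral.integral_const_mul, intervalIntegral.integral_ofReal]
  have hπ : (Real.pi : ℂ) ≠ 0 := Complex.ofReal_ne_zero.mpr Real.pi_ne_zero
  rcases hθ with ⟨h1, h2⟩ | ⟨h1, h2⟩
  · have hsin : Real.sin θ = Real.sqrt (1 - Real.cos θ ^ 2) :=
      Real.sin_eq_sqrt_one_sub_cos_sq h1.le h2.le
    have hint : (∫ k in (-Real.pi)..Real.pi,
        Real.sin θ / (1 - Real.cos k ^ 2 * Real.cos θ ^ 2)) = 2 * Real.pi := by
      rw [hsin]; exact keyIntegral (Real.cos θ) hc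
    rw [h5, hint, if_pos h1]
    push_cast
    field_simp [Complex.I_ne_zero]
  · have hsinneg : Real.sin θ < 0 := Real.sin_neg_of_neg_of_neg_pi_lt h2 h1
    have hsin : Real.sin θ = -Real.sqrt (1 - Real.cos θ ^ 2) := by
      have := Real.abs_sin_eq_sqrt_one_sub_cos_sq θ
      rw [abs_of_neg hsinneg] at this
      linarith
    have hint : (∫ k in (-Real.pi)..Real.pi,
        Real.sin θ / (1 - Real.cos k ^ 2 * Real.cos θ ^ 2)) = -(2 * Real.pi) := by
      rw [hsin]
      simp only [neg_div]
      rw [intervalIntegral.integral_neg, keyIntegral (Real.cos θ) hc]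
    rw [h5, hint, if_neg (not_lt.mpr h2.le)]
    push_cast
    field_simp [Complex.I_ne_zero]
end
end

section
/- (Winding number ν″ of the homogeneous walk.) For θ ∈ ℝ with −π < θ < π and θ ≠ 0, define h : ℝ → ℂ by h(k) = (sin θ + i·sin k·cos θ)/√(1 − cos²k·cos²θ) (the denominator is strictly positive for all k since sin θ ≠ 0). Then h takes values in the unit circle and the winding number (1/(2πi))·∫_{−π}^{π} conj(h(k))·h′(k) dk equals 0. -/
noncomputable section
open Complex

theorem stmt_19
    (θ : ℝ) (hθ : -Real.pi < θ ∧ θ < Real.pi ∧ θ ≠ 0)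
    (h : ℝ → ℂ)
    (hh : h = fun k => (((Real.sin θ : ℝ) : ℂ)
        + Complex.I * ((Real.sin k * Real.cos θ : ℝ) : ℂ))
        / ((Real.sqrt (1 - Real.cos k ^ 2 * Real.cos θ ^ 2) : ℝ) : ℂ)) :
    (∀ k : ℝ, ‖h k‖ = 1) ∧
    (1 / (2 * (Real.pi : ℂ) * Complex.I)) *
        ∫ k in (-Real.pi)..Real.pi, (starRingEnd ℂ) (h k) * deriv h k
      = 0 := by
  obtain ⟨hθ1, hθ2, hθ3⟩ := hθ
  have ha : Real.sin θ ≠ 0 := fun h0 =>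
    hθ3 ((Real.sin_eq_zero_iff_of_lt_of_lt hθ1 hθ2).mp h0)
  set a := Real.sin θ with ha_def
  have hpyth : ∀ k : ℝ, 1 - Real.cos k ^ 2 * Real.cos θ ^ 2
      = a ^ 2 + (Real.sin k * Real.cos θ) ^ 2 := by
    intro k
    have h1 := Real.sin_sq_add_cos_sq k
    have h2 := Real.sin_sq_add_cos_sq θ
    nlinarith
  have hsum_pos : ∀ k : ℝ, 0 < a ^ 2 + (Real.sin k * Real.cos θ) ^ 2 := by
    intro k
    have : 0 < a ^ 2 := by positivity
    nlinarith [sq_nonneg (Real.sin k * Real.cos θ)]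
  -- Part 1
  have habs : ∀ k : ℝ, ‖h k‖ = 1 := by
    intro k
    rw [hh]
    simp only [norm_div, Complex.norm_real, Real.norm_eq_abs]
    rw [mul_comm Complex.I, Complex.norm_add_mul_I]
    rw [hpyth k, _root_.abs_of_nonneg (Real.sqrt_nonneg _)]
    exact div_self (Real.sqrt_pos.mpr (hsum_pos k)).ne'
  refine ⟨habs, ?_⟩
  -- the phase function
  set φ : ℝ → ℝ := fun k => Real.arctan (Real.sin k * Real.cos θ / a) with hφ_def
  set s : ℝ := a / |a| with hs_def
  have habs_a : |a| ≠ 0 := abs_ne_zero.mpr ha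
  have hs2 : s * s = 1 := by
    rw [hs_def, div_mul_div_comm, ← abs_mul, abs_mul_self]
    exact div_self (by positivity)
  -- key: h = s * exp (i φ)
  have hfun : h = fun k => (s : ℂ) * Complex.exp ((φ k : ℂ) * Complex.I) := by
    rw [hh]
    funext k
    set b := Real.sin k * Real.cos θ with hb_def
    have hRpos : 0 < a ^ 2 + b ^ 2 := hsum_pos k
    set R := Real.sqrt (a ^ 2 + b ^ 2) with hR_def
    have hRpos' : 0 < R := Real.sqrt_pos.mpr hRpos
    have hRne : R ≠ 0 := hRpos'.ne'
    have hsr : Real.sqrt (1 + (b / a) ^ 2) = R / |a| := by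
      have h1 : 1 + (b / a) ^ 2 = (a ^ 2 + b ^ 2) / a ^ 2 := by
        field_simp
      rw [h1, hR_def, Real.sqrt_div hRpos.le, Real.sqrt_sq_eq_abs]
    have hexp : Complex.exp ((φ k : ℂ) * Complex.I)
        = ((Real.cos (φ k) : ℝ) : ℂ) + ((Real.sin (φ k) : ℝ) : ℂ) * Complex.I := by
      rw [Complex.exp_mul_I, Complex.ofReal_cos, Complex.ofReal_sin]
    rw [hexp, hφ_def]
    simp only
    rw [Real.cos_arctan, Real.sin_arctan, hsr]
    have e1 : (1 : ℝ) / (R / |a|) = |a| / R := by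
      rw [one_div_div]
    have e2 : (b / a) / (R / |a|) = b * |a| / (a * R) := by
      field_simp
    rw [e1, e2, hpyth k, ← hb_def, ← hR_def, hs_def]
    have haC : (a : ℂ) ≠ 0 := Complex.ofReal_ne_zero.mpr ha
    have habsC : ((|a| : ℝ) : ℂ) ≠ 0 := Complex.ofReal_ne_zero.mpr habs_a
    have hRC : ((R : ℝ) : ℂ) ≠ 0 := Complex.ofReal_ne_zero.mpr hRne
    push_cast
    field_simp
  -- differentiability of φ
  have hφC : ContDiff ℝ 1 φ :=
    Real.contDiff_arctan.comp ((Real.contDiff_sin.mul contDiff_const).div_const _)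
  have hφd : ∀ k : ℝ, DifferentiableAt ℝ φ k := fun k =>
    (hφC.differentiable one_ne_zero).differentiableAt
  have hdc : Continuous (deriv φ) := hφC.continuous_deriv le_rfl
  -- derivative of h
  have hderiv : ∀ k : ℝ, HasDerivAt h
      ((s : ℂ) * (Complex.exp ((φ k : ℂ) * Complex.I) * (((deriv φ k : ℝ) : ℂ) * Complex.I))) k := by
    intro k
    have h1 : HasDerivAt φ (deriv φ k) k := (hφd k).hasDerivAt
    have h2 : HasDerivAt (fun k => ((φ k : ℝ) : ℂ)) ((deriv φ k : ℝ) : ℂ) k := h1.ofReal_comp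
    have h3 := (h2.mul_const Complex.I).cexp
    have h4 := h3.const_mul (s : ℂ)
    rw [hfun]
    exact h4
  -- integrand simplification
  have hint : ∀ k : ℝ, (starRingEnd ℂ) (h k) * deriv h k
      = ((deriv φ k : ℝ) : ℂ) * Complex.I := by
    intro k
    rw [(hderiv k).deriv]
    rw [hfun]
    simp only [map_mul, Complex.conj_ofReal, ← Complex.exp_conj, Complex.conj_I, map_neg]
    have hexp1 : Complex.exp ((φ k : ℂ) * -Complex.I) * Complex.exp ((φ k : ℂ) * Complex.I)
        = 1 := by
      rw [← Complex.exp_add]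
      ring_nf
      exact Complex.exp_zero
    have hs2C : (s : ℂ) * (s : ℂ) = 1 := by
      rw [← Complex.ofReal_mul, hs2, Complex.ofReal_one]
    calc ((s : ℝ) : ℂ) * Complex.exp ((φ k : ℂ) * -Complex.I) *
          ((s : ℂ) * (Complex.exp ((φ k : ℂ) * Complex.I) * (((deriv φ k : ℝ) : ℂ) * Complex.I)))
        = ((s : ℂ) * s) * (Complex.exp ((φ k : ℂ) * -Complex.I) *
            Complex.exp ((φ k : ℂ) * Complex.I)) * (((deriv φ k : ℝ) : ℂ) * Complex.I) := by ring
      _ = ((deriv φ k : ℝ) : ℂ) * Complex.I := by rw [hexp1, hs2C, one_mul, one_mul]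
  -- compute the integral
  have hI : (∫ k in (-Real.pi)..Real.pi, (starRingEnd ℂ) (h k) * deriv h k) = 0 := by
    have : (∫ k in (-Real.pi)..Real.pi, (starRingEnd ℂ) (h k) * deriv h k)
        = ∫ k in (-Real.pi)..Real.pi, ((deriv φ k : ℝ) : ℂ) * Complex.I := by
      apply intervalIntegral.integral_congr
      intro k _
      exact hint k
    rw [this, intervalIntegral.integral_mul_const, intervalIntegral.integral_ofReal]
    have hd : (∫ k in (-Real.pi)..Real.pi, deriv φ k) = φ Real.pi - φ (-Real.pi) :=
      intervalIntegral.integral_deriv_eq_sub (fun x _ => hφd x)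
        (hdc.intervalIntegrable _ _)
    have hφπ : φ Real.pi = 0 := by
      rw [hφ_def]
      simp [Real.sin_pi]
    have hφπ' : φ (-Real.pi) = 0 := by
      rw [hφ_def]
      simp [Real.sin_pi]
    rw [hd, hφπ, hφπ']
    simp
  rw [hI, mul_zero]
end
end
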